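/- arXiv:2409.05072 — 8 statements merged into one kernel-verified Lean document; each statement's English description precedes it below -/
import Mathlib

section
/- (Lemma 1.) Let x_1, …, x_B (with B ≥ 2) be sequences x_i ∈ 𝒳^{n_i} with n_i ≥ 1, let N = Σ_{i=1}^B n_i, w_i = n_i/N, and let P̂_i be the empirical distribution of x_i. Then G((P̂_i)_{i∈[B]}, (w_i)_{i∈[B]}) = (1/N) · log [ (max over tuples of distributions (P_1,…,P_B) on 𝒳 of ∏_{i=1}^B ∏_{j=1}^{n_i} P_i(x_{i,j})) / (max over single distributions P on 𝒳 of ∏_{i=1}^B ∏_{j=1}^{n_i} P(x_{i,j})) ]. -/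
open Finset
open scoped Classical

/-- KL divergence between two distributions on a finite alphabet (convention `0 * log 0 = 0`). -/
noncomputable def klDiv {X : Type*} [Fintype X] (P Q : X → ℝ) : ℝ :=
  ∑ a, P a * Real.log (P a / Q a)

/-- The statistic `G((P_i), (w_i))`. -/
noncomputable def Gstat {X ι : Type*} [Fintype X] [Fintype ι]
    (P : ι → X → ℝ) (w : ι → ℝ) : ℝ :=
  if ∀ i, w i = 0 then 0
  else ∑ i, w i * klDiv (P i) (fun a => (∑ j, w j * P j a) / (∑ j, w j))

/-- `P` is a probability distribution on the finite alphabet `X`. -/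
def IsDist {X : Type*} [Fintype X] (P : X → ℝ) : Prop :=
  (∀ a, 0 ≤ P a) ∧ ∑ a, P a = 1

/-- Empirical distribution of a sequence `x ∈ X^n`. -/
noncomputable def empDist {X : Type*} [Fintype X] {n : ℕ} (x : Fin n → X) : X → ℝ :=
  fun a => ((univ.filter fun j => x j = a).card : ℝ) / n

lemma count_sum {X : Type*} [Fintype X] {n : ℕ} (x : Fin n → X) :
    ∑ a, (univ.filter fun j => x j = a).card = n := by
  rw [← Finset.card_eq_sum_card_fiberwise (f := x) (t := univ) (fun j _ => mem_univ _),
    card_univ, Fintype.card_fin]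

lemma prod_eq_prod_pow {X : Type*} [Fintype X] {n : ℕ} (x : Fin n → X) (f : X → ℝ) :
    ∏ j, f (x j) = ∏ a, f a ^ (univ.filter fun j => x j = a).card := by
  rw [← Finset.prod_fiberwise (s := univ) (g := x) (f := fun j => f (x j))]
  refine Finset.prod_congr rfl fun a _ => ?_
  rw [Finset.prod_congr rfl (fun j hj => by rw [(mem_filter.1 hj).2]),
    Finset.prod_const]

lemma empDist_isDist {X : Type*} [Fintype X] {n : ℕ} (hn : 0 < n) (x : Fin n → X) :
    IsDist (empDist x) := by
  constructor
  · intro a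
    exact div_nonneg (Nat.cast_nonneg _) (Nat.cast_nonneg _)
  · simp only [empDist]
    rw [← Finset.sum_div, ← Nat.cast_sum, count_sum,
      div_self (by exact_mod_cast hn.ne' : (n:ℝ) ≠ 0)]

lemma ml_bound {X : Type*} [Fintype X] (k : X → ℕ) (n : ℕ) (hn : 0 < n)
    (hk : ∑ a, k a = n) (P : X → ℝ) (hP : IsDist P) :
    ∏ a, P a ^ k a ≤ ∏ a, ((k a : ℝ) / n) ^ k a := by
  obtain ⟨hP0, hP1⟩ := hP
  have hn' : (0:ℝ) < n := Nat.cast_pos.2 hn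
  set w : X → ℝ := fun a => (k a : ℝ) / n with hwdef
  have hw0 : ∀ a, 0 ≤ w a := fun a => div_nonneg (Nat.cast_nonneg _) hn'.le
  have hw1 : ∑ a, w a = 1 := by
    rw [hwdef, ← Finset.sum_div, ← Nat.cast_sum, hk, div_self hn'.ne']
  set t : X → ℝ := fun a => if k a = 0 then 1 else P a * n / k a with htdef
  have ht0 : ∀ a, 0 ≤ t a := by
    intro a
    simp only [htdef]
    split
    · norm_num
    · exact div_nonneg (mul_nonneg (hP0 a) hn'.le) (Nat.cast_nonneg _)
  have hgm : ∏ a, t a ^ (w a) ≤ ∑ a, w a * t a :=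
    Real.geom_mean_le_arith_mean_weighted univ w t (fun a _ => hw0 a) hw1 (fun a _ => ht0 a)
  have hsum : ∑ a, w a * t a ≤ 1 := by
    rw [← hP1]
    refine Finset.sum_le_sum fun a _ => ?_
    by_cases h : k a = 0
    · simp [htdef, hwdef, h, hP0 a]
    · have hka : (0:ℝ) < k a := Nat.cast_pos.2 (Nat.pos_of_ne_zero h)
      have : w a * t a = P a := by
        simp only [htdef, hwdef, if_neg h]
        field_simp
      rw [this]
  have key : ∏ a, (P a) ^ (w a) ≤ ∏ a, ((k a : ℝ)/n) ^ (w a) := by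
    have hsplit : ∏ a, (P a) ^ (w a) = (∏ a, t a ^ (w a)) * ∏ a, ((k a : ℝ)/n) ^ (w a) := by
      rw [← Finset.prod_mul_distrib]
      refine Finset.prod_congr rfl fun a _ => ?_
      by_cases h : k a = 0
      · simp [htdef, hwdef, h, Real.rpow_zero]
      · have hka : (0:ℝ) < k a := Nat.cast_pos.2 (Nat.pos_of_ne_zero h)
        rw [← Real.mul_rpow (ht0 a) (div_nonneg (Nat.cast_nonneg _) hn'.le)]
        congr 1
        simp only [htdef, if_neg h]
        field_simp
    rw [hsplit]
    exact mul_le_of_le_one_left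
      (Finset.prod_nonneg fun a _ => Real.rpow_nonneg (hw0 a) _) (hgm.trans hsum)
  have lift : ∀ (Q : X → ℝ), (∀ a, 0 ≤ Q a) → ∏ a, Q a ^ k a = (∏ a, Q a ^ (w a)) ^ n := by
    intro Q hQ
    rw [← Finset.prod_pow]
    refine Finset.prod_congr rfl fun a _ => ?_
    rw [← Real.rpow_natCast (Q a ^ w a) n, ← Real.rpow_mul (hQ a), hwdef]
    rw [div_mul_cancel₀ _ hn'.ne', Real.rpow_natCast]
  rw [lift P hP0, lift (fun a => (k a : ℝ)/n) hw0]
  exact pow_le_pow_left₀ (Finset.prod_nonneg fun a _ => Real.rpow_nonneg (hP0 a) _) key n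

theorem stmt1 {X : Type*} [Fintype X] [Nonempty X]
    (B : ℕ) (hB : 2 ≤ B) (n : Fin B → ℕ) (hn : ∀ i, 1 ≤ n i)
    (x : ∀ i, Fin (n i) → X)
    (N : ℝ) (hN : N = ∑ i, (n i : ℝ))
    (w : Fin B → ℝ) (hw : ∀ i, w i = (n i : ℝ) / N)
    (M₁ M₂ : ℝ)
    (hM₁ : M₁ = sSup {v : ℝ | ∃ P : Fin B → X → ℝ,
        (∀ i, IsDist (P i)) ∧ v = ∏ i, ∏ j, P i (x i j)})
    (hM₂ : M₂ = sSup {v : ℝ | ∃ P : X → ℝ,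
        IsDist P ∧ v = ∏ i, ∏ j, P (x i j)}) :
    Gstat (fun i => empDist (x i)) w = (1 / N) * Real.log (M₁ / M₂) := by
  classical
  set c : Fin B → X → ℕ := fun i a => (univ.filter fun j => x i j = a).card with hc
  set K : X → ℕ := fun a => ∑ i, c i a with hK
  have hB0 : 0 < B := by omega
  have i0 : Fin B := ⟨0, hB0⟩
  have hni : ∀ i, (0:ℝ) < n i := fun i => Nat.cast_pos.2 (hn i)
  have hNpos : 0 < N := by
    rw [hN]; exact Finset.sum_pos (fun i _ => hni i) ⟨i0, mem_univ _⟩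
  have hNnat : N = ((∑ i, n i : ℕ) : ℝ) := by rw [hN]; push_cast; rfl
  have hcsum : ∀ i, ∑ a, c i a = n i := fun i => count_sum (x i)
  have hKsum : ∑ a, K a = ∑ i, n i := by
    rw [hK, Finset.sum_comm]
    exact Finset.sum_congr rfl fun i _ => hcsum i
  set V₁ : ℝ := ∏ i, ∏ a, ((c i a : ℝ) / (n i)) ^ (c i a) with hV₁
  set V₂ : ℝ := ∏ a, ((K a : ℝ) / N) ^ (K a) with hV₂
  -- M₁ = V₁
  have hemp : ∀ i a, empDist (x i) a = (c i a : ℝ) / (n i) := fun i a => rfl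
  have hM₁V : M₁ = V₁ := by
    rw [hM₁]
    apply IsGreatest.csSup_eq
    constructor
    · refine ⟨fun i => empDist (x i), fun i => empDist_isDist (hn i) (x i), ?_⟩
      exact (Finset.prod_congr rfl fun i _ =>
        (prod_eq_prod_pow (x i) (empDist (x i)) :
          ∏ j, empDist (x i) (x i j) = ∏ a, ((c i a : ℝ) / (n i)) ^ (c i a))).symm
    · rintro v ⟨P, hP, rfl⟩
      calc ∏ i, ∏ j, P i (x i j) = ∏ i, ∏ a, P i a ^ c i a :=
            Finset.prod_congr rfl fun i _ => prod_eq_prod_pow (x i) _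
        _ ≤ V₁ := by
            refine Finset.prod_le_prod (fun i _ => Finset.prod_nonneg fun a _ =>
              pow_nonneg ((hP i).1 a) _) (fun i _ => ?_)
            exact ml_bound (c i) (n i) (hn i) (hcsum i) (P i) (hP i)
  -- M₂ = V₂
  have hQdist : IsDist (fun a => (K a : ℝ) / N) := by
    constructor
    · intro a; exact div_nonneg (Nat.cast_nonneg _) hNpos.le
    · rw [← Finset.sum_div, ← Nat.cast_sum, hKsum, ← hNnat, div_self hNpos.ne']
  have hprodQ : ∀ P : X → ℝ, ∏ i, ∏ j, P (x i j) = ∏ a, P a ^ K a := by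
    intro P
    rw [Finset.prod_congr rfl fun i (_ : i ∈ univ) => prod_eq_prod_pow (x i) P,
      Finset.prod_comm]
    exact Finset.prod_congr rfl fun a _ => Finset.prod_pow_eq_pow_sum univ (fun i => c i a) _
  have hM₂V : M₂ = V₂ := by
    rw [hM₂]
    apply IsGreatest.csSup_eq
    constructor
    · exact ⟨fun a => (K a : ℝ) / N, hQdist, (hprodQ _).symm⟩
    · rintro v ⟨P, hP, rfl⟩
      rw [hprodQ P]
      have := ml_bound K (∑ i, n i) (Finset.sum_pos (fun i _ => hn i) ⟨i0, mem_univ _⟩)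
        hKsum P hP
      rwa [← hNnat] at this
  -- positivity of V₁, V₂
  have hV₁pos : 0 < V₁ := by
    refine Finset.prod_pos fun i _ => Finset.prod_pos fun a _ => ?_
    rcases Nat.eq_zero_or_pos (c i a) with h | h
    · simp [h]
    · exact pow_pos (div_pos (Nat.cast_pos.2 h) (hni i)) _
  have hV₂pos : 0 < V₂ := by
    refine Finset.prod_pos fun a _ => ?_
    rcases Nat.eq_zero_or_pos (K a) with h | h
    · simp [h]
    · exact pow_pos (div_pos (Nat.cast_pos.2 h) hNpos) _
  -- logs
  have hlog₁ : Real.log V₁ = ∑ i, ∑ a, (c i a : ℝ) * Real.log ((c i a : ℝ) / (n i)) := by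
    rw [hV₁, Real.log_prod (fun i _ => ne_of_gt (Finset.prod_pos fun a _ => by
      rcases Nat.eq_zero_or_pos (c i a) with h | h
      · simp [h]
      · exact pow_pos (div_pos (Nat.cast_pos.2 h) (hni i)) _))]
    refine Finset.sum_congr rfl fun i _ => ?_
    rw [Real.log_prod (fun a _ => by
      rcases Nat.eq_zero_or_pos (c i a) with h | h
      · simp [h]
      · exact ne_of_gt (pow_pos (div_pos (Nat.cast_pos.2 h) (hni i)) _))]
    exact Finset.sum_congr rfl fun a _ => Real.log_pow _ _
  have hlog₂ : Real.log V₂ = ∑ i, ∑ a, (c i a : ℝ) * Real.log ((K a : ℝ) / N) := by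
    rw [hV₂, Real.log_prod (fun a _ => by
      rcases Nat.eq_zero_or_pos (K a) with h | h
      · simp [h]
      · exact ne_of_gt (pow_pos (div_pos (Nat.cast_pos.2 h) hNpos) _))]
    rw [Finset.sum_comm]
    refine Finset.sum_congr rfl fun a _ => ?_
    rw [Real.log_pow, ← Finset.sum_mul]
    congr 1
    rw [hK]; push_cast; ring
  -- Gstat side
  have hwpos : ∀ i, 0 < w i := fun i => (hw i) ▸ div_pos (hni i) hNpos
  have hwsum : ∑ j, w j = 1 := by
    rw [Finset.sum_congr rfl fun j (_ : j ∈ univ) => hw j, ← Finset.sum_div, ← hN,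
      div_self hNpos.ne']
  have hW : (fun a => (∑ j, w j * (fun i => empDist (x i)) j a) / (∑ j, w j))
      = fun a => (K a : ℝ) / N := by
    funext a
    rw [hwsum, div_one]
    rw [Finset.sum_congr rfl fun j (_ : j ∈ univ) => ?_]
    · rw [hK, ← Finset.sum_div]
      push_cast
      rfl
    · show w j * empDist (x j) a = (c j a : ℝ) / N
      rw [hw j, hemp]
      field_simp [(hni j).ne', hNpos.ne']
  rw [Gstat, if_neg (by push_neg; exact ⟨i0, (hwpos i0).ne'⟩), hW, hM₁V, hM₂V,
    Real.log_div hV₁pos.ne' hV₂pos.ne', hlog₁, hlog₂]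
  rw [← Finset.sum_sub_distrib, Finset.mul_sum]
  refine Finset.sum_congr rfl fun i _ => ?_
  rw [klDiv, ← Finset.sum_sub_distrib, Finset.mul_sum, Finset.mul_sum]
  refine Finset.sum_congr rfl fun a _ => ?_
  rw [hemp]
  rcases Nat.eq_zero_or_pos (c i a) with h | h
  · simp [h]
  · have hca : (0:ℝ) < c i a := Nat.cast_pos.2 h
    have hKa : (0:ℝ) < K a := by
      have : c i a ≤ K a := Finset.single_le_sum (f := fun j => c j a)
        (fun j _ => Nat.zero_le _) (mem_univ i)
      exact lt_of_lt_of_le hca (Nat.cast_le.2 this)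
    have hKa' : (0:ℝ) < K a := hKa
    rw [Real.log_div (div_pos hca (hni i)).ne' (div_pos hKa hNpos).ne']
    have h1 : w i * ((c i a : ℝ) / (n i)) = (c i a : ℝ) / N := by
      rw [hw i]; field_simp [(hni i).ne', hNpos.ne']
    rw [show w i * ((c i a : ℝ) / (n i) *
        (Real.log ((c i a : ℝ) / (n i)) - Real.log ((K a : ℝ) / N)))
        = (w i * ((c i a : ℝ) / (n i))) *
        (Real.log ((c i a : ℝ) / (n i)) - Real.log ((K a : ℝ) / N)) from by ring, h1]
    ring
end

section
/- (Lemma 3, C-tracking bound.) Fix an integer K ≥ 1. Let (z̃(s))_{s≥1} be a sequence of vectors in Σ_K. Suppose N : ℕ → ℕ^K satisfies N(0) = 0 and, for every t ≥ 1, there exists A_t ∈ [K] such that N(t) = N(t−1) + e_{A_t} and Σ_{s=1}^t z̃_{A_t}(s) − N_{A_t}(t−1) ≥ Σ_{s=1}^t z̃_i(s) − N_i(t−1) for every i ∈ [K]. Then for all t ≥ 1 and all i ∈ [K], |N_i(t) − Σ_{s=1}^t z̃_i(s)| ≤ K − 1. -/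
open Finset

theorem stmt5 (K : ℕ) (hK : 1 ≤ K)
    (z : ℕ → Fin K → ℝ)
    (hz : ∀ s, 1 ≤ s → (∀ i, 0 ≤ z s i) ∧ ∑ i, z s i = 1)
    (N : ℕ → Fin K → ℕ)
    (hN0 : ∀ i, N 0 i = 0)
    (hstep : ∀ t, 1 ≤ t → ∃ A : Fin K,
      (∀ i, N t i = N (t - 1) i + if i = A then 1 else 0) ∧
      (∀ i : Fin K,
        (∑ s ∈ Icc 1 t, z s i) - (N (t - 1) i : ℝ)
          ≤ (∑ s ∈ Icc 1 t, z s A) - (N (t - 1) A : ℝ))) :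
    ∀ t, 1 ≤ t → ∀ i : Fin K,
      |(N t i : ℝ) - ∑ s ∈ Icc 1 t, z s i| ≤ (K : ℝ) - 1 := by
  have hKR : (1:ℝ) ≤ K := by exact_mod_cast hK
  have hK0 : (0:ℝ) < K := by linarith
  have hcK : (1/(K:ℝ)) * K = 1 := by field_simp
  have hc0 : (0:ℝ) < 1/K := by positivity
  -- sum over i of the z-sum equals t
  have sumZ : ∀ t, ∑ i, ∑ s ∈ Icc 1 t, z s i = t := by
    intro t
    rw [Finset.sum_comm]
    rw [Finset.sum_congr rfl (fun s hs => (hz s (mem_Icc.mp hs).1).2)]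
    simp [Nat.card_Icc]
  -- sum over i of N equals t
  have sumN : ∀ t, ∑ i, N t i = t := by
    intro t
    induction t with
    | zero => simp [hN0]
    | succ n ih =>
      obtain ⟨A, h1, _⟩ := hstep (n+1) (by omega)
      simp only [Nat.add_sub_cancel] at h1
      rw [Finset.sum_congr rfl (fun i _ => h1 i), Finset.sum_add_distrib, ih]
      simp
  set D : ℕ → Fin K → ℝ := fun t i => (∑ s ∈ Icc 1 t, z s i) - (N t i : ℝ) with hD
  have sumNR : ∀ t, ∑ i, (N t i : ℝ) = t := by
    intro t
    rw [← Nat.cast_sum, sumN]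
  have sumD : ∀ t, ∑ i, D t i = 0 := by
    intro t
    simp only [hD]
    rw [Finset.sum_sub_distrib, sumZ, sumNR]
    ring
  have lower : ∀ t, ∀ i, -(1 - 1/(K:ℝ)) ≤ D t i := by
    intro t
    induction t with
    | zero =>
      intro i
      have : D 0 i = 0 := by simp [hD, hN0]
      rw [this]
      have : 1/(K:ℝ) ≤ 1 := by
        rw [div_le_one hK0]; exact hKR
      linarith
    | succ n ih =>
      obtain ⟨A, h1, h2⟩ := hstep (n+1) (by omega)
      simp only [Nat.add_sub_cancel] at h1 h2
      have havg : 1/(K:ℝ) ≤ (∑ s ∈ Icc 1 (n+1), z s A) - (N n A : ℝ) := by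
        have hsum := Finset.sum_le_sum (fun i (_ : i ∈ univ) => h2 i)
        rw [Finset.sum_sub_distrib, sumZ, sumNR, Finset.sum_const, card_univ,
          Fintype.card_fin, nsmul_eq_mul] at hsum
        push_cast at hsum
        rw [div_le_iff₀ hK0]
        nlinarith [hsum]
      intro i
      by_cases hiA : i = A
      · subst hiA
        have hN1 : (N (n+1) i : ℝ) = (N n i : ℝ) + 1 := by
          rw [h1 i, if_pos rfl]; push_cast; ring
        simp only [hD]
        rw [hN1]
        linarith [havg]
      · have hzpos := (hz (n+1) (by omega)).1 i
        have hsum : ∑ s ∈ Icc 1 (n+1), z s i = (∑ s ∈ Icc 1 n, z s i) + z (n+1) i := by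
          rw [← Finset.sum_Icc_succ_top (by omega : 1 ≤ n+1)]
        have hN1 : (N (n+1) i : ℝ) = (N n i : ℝ) := by
          rw [h1 i, if_neg hiA]; push_cast; ring
        have := ih i
        simp only [hD] at this ⊢
        rw [hN1, hsum]
        linarith
  intro t ht i
  have hlow := lower t i
  have hup : D t i ≤ ((K:ℝ) - 1) * (1 - 1/K) := by
    have h0 := sumD t
    rw [← Finset.add_sum_erase _ _ (mem_univ i)] at h0
    have hsum : ∑ j ∈ univ.erase i, (-(1 - 1/(K:ℝ))) ≤ ∑ j ∈ univ.erase i, D t j :=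
      Finset.sum_le_sum (fun j _ => lower t j)
    rw [Finset.sum_const, card_erase_of_mem (mem_univ i), card_univ,
      Fintype.card_fin, nsmul_eq_mul, Nat.cast_sub hK, Nat.cast_one] at hsum
    have hr : ((K:ℝ) - 1) * -(1 - 1/K) = -(((K:ℝ) - 1) * (1 - 1/K)) := by ring
    rw [hr] at hsum
    ring_nf at h0 hsum ⊢
    linarith
  have key1 : ((K:ℝ) - 1) * (1 - 1/K) ≤ (K:ℝ) - 1 := by nlinarith
  have key2 : 1 - 1/(K:ℝ) ≤ (K:ℝ) - 1 := by nlinarith [sq_nonneg ((K:ℝ) - 1)]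
  have hDeq : (N t i : ℝ) - ∑ s ∈ Icc 1 t, z s i = -(D t i) := by
    simp only [hD]; ring
  rw [hDeq, abs_neg, abs_le]
  constructor <;> [linarith; linarith]
end

section
/- (Corollary 1, lower bound on pulls under forced exploration.) Fix an integer K ≥ 1. Let (z̃(s))_{s≥1} be a sequence of vectors in Σ_K and let S ⊆ ℕ be a set of indices such that z̃(s) = (1/K, …, 1/K) for every s ∈ S. Suppose N : ℕ → ℕ^K satisfies N(0) = 0 and, for every t ≥ 1, there exists A_t ∈ [K] such that N(t) = N(t−1) + e_{A_t} and Σ_{s=1}^t z̃_{A_t}(s) − N_{A_t}(t−1) ≥ Σ_{s=1}^t z̃_i(s) − N_i(t−1) for every i ∈ [K]. Then for every t ≥ 1 with |S ∩ [t]| ≥ ⌈√t · log t⌉ and every i ∈ [K], N_i(t) ≥ (√t · log t)/K − K + 1. -/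
open Finset
open scoped Classical

theorem stmt6 (K : ℕ) (hK : 1 ≤ K)
    (z : ℕ → Fin K → ℝ)
    (hz : ∀ s, 1 ≤ s → (∀ i, 0 ≤ z s i) ∧ ∑ i, z s i = 1)
    (S : Set ℕ)
    (hS : ∀ s ∈ S, ∀ i : Fin K, z s i = 1 / K)
    (N : ℕ → Fin K → ℕ)
    (hN0 : ∀ i, N 0 i = 0)
    (hstep : ∀ t, 1 ≤ t → ∃ A : Fin K,
      (∀ i, N t i = N (t - 1) i + if i = A then 1 else 0) ∧
      (∀ i : Fin K,
        (∑ s ∈ Icc 1 t, z s i) - (N (t - 1) i : ℝ)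
          ≤ (∑ s ∈ Icc 1 t, z s A) - (N (t - 1) A : ℝ))) :
    ∀ t : ℕ, 1 ≤ t →
      ⌈Real.sqrt t * Real.log t⌉₊ ≤ ((Icc 1 t).filter (· ∈ S)).card →
      ∀ i : Fin K,
        Real.sqrt t * Real.log t / K - K + 1 ≤ (N t i : ℝ) := by
  have hKpos : (0:ℝ) < K := by exact_mod_cast hK
  -- total number of pulls equals t
  have htotN : ∀ t : ℕ, ∑ i, N t i = t := by
    intro t
    induction t with
    | zero => simp [hN0]
    | succ n ih =>
      obtain ⟨A, hA1, _⟩ := hstep (n+1) (by omega)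
      simp only [Nat.add_sub_cancel] at hA1
      calc ∑ i, N (n+1) i = ∑ i, (N n i + if i = A then 1 else 0) :=
            Finset.sum_congr rfl (fun i _ => hA1 i)
        _ = (∑ i, N n i) + ∑ i, (if i = A then 1 else 0) := Finset.sum_add_distrib
        _ = n + 1 := by rw [ih]; simp
  -- sum of z over a step window
  have hzsum : ∀ t : ℕ, ∑ j, (∑ s ∈ Icc 1 t, z s j) = (t : ℝ) := by
    intro t
    rw [Finset.sum_comm]
    have : ∀ s ∈ Icc 1 t, ∑ j, z s j = 1 := fun s hs => (hz s (Finset.mem_Icc.mp hs).1).2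
    rw [Finset.sum_congr rfl this]
    simp
  -- lower invariant
  have hlow : ∀ t : ℕ, ∀ i : Fin K,
      1/(K:ℝ) - 1 ≤ (∑ s ∈ Icc 1 t, z s i) - (N t i : ℝ) := by
    intro t
    induction t with
    | zero =>
      intro i
      have h1 : ((K:ℝ))⁻¹ ≤ 1 := by
        rw [inv_le_one_iff₀]; right; exact_mod_cast hK
      simp [hN0, one_div]
      linarith
    | succ n ih =>
      obtain ⟨A, hA1, hA2⟩ := hstep (n+1) (by omega)
      simp only [Nat.add_sub_cancel] at hA1 hA2
      have hsumE : ∑ j, ((∑ s ∈ Icc 1 (n+1), z s j) - (N n j : ℝ)) = 1 := by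
        rw [Finset.sum_sub_distrib, hzsum]
        have : ∑ j, ((N n j : ℝ)) = (n : ℝ) := by
          rw [← Nat.cast_sum, htotN]
        rw [this]; push_cast; ring
      have hEA : 1/(K:ℝ) ≤ (∑ s ∈ Icc 1 (n+1), z s A) - (N n A : ℝ) := by
        rw [div_le_iff₀ hKpos]
        have h1 : (1:ℝ) ≤ ∑ _j : Fin K, ((∑ s ∈ Icc 1 (n+1), z s A) - (N n A : ℝ)) := by
          rw [← hsumE]
          exact Finset.sum_le_sum (fun j _ => hA2 j)
        rwa [Finset.sum_const, Finset.card_univ, Fintype.card_fin, nsmul_eq_mul,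
          mul_comm] at h1
      intro i
      by_cases hiA : i = A
      · subst hiA
        have hN1 : (N (n+1) i : ℝ) = (N n i : ℝ) + 1 := by
          rw [hA1 i]; simp
        rw [hN1]
        linarith
      · have hN1 : (N (n+1) i : ℝ) = (N n i : ℝ) := by
          rw [hA1 i]; simp [hiA]
        have hsplit : (∑ s ∈ Icc 1 (n+1), z s i)
            = (∑ s ∈ Icc 1 n, z s i) + z (n+1) i :=
          Finset.sum_Icc_succ_top (by omega) _
        have hznn : 0 ≤ z (n+1) i := (hz (n+1) (by omega)).1 i
        rw [hN1, hsplit]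
        have := ih i
        linarith
  -- upper bound
  have hup : ∀ t : ℕ, ∀ i : Fin K,
      (∑ s ∈ Icc 1 t, z s i) - (N t i : ℝ) ≤ (K:ℝ) - 1 := by
    intro t i
    have hsum0 : ∑ j, ((∑ s ∈ Icc 1 t, z s j) - (N t j : ℝ)) = 0 := by
      rw [Finset.sum_sub_distrib, hzsum]
      have : ∑ j, ((N t j : ℝ)) = (t : ℝ) := by
        rw [← Nat.cast_sum, htotN]
      rw [this]; ring
    have hsplit := Finset.add_sum_erase Finset.univ
      (fun j => (∑ s ∈ Icc 1 t, z s j) - (N t j : ℝ)) (Finset.mem_univ i)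
    rw [hsum0] at hsplit
    have hbound : ∑ j ∈ Finset.univ.erase i, -((∑ s ∈ Icc 1 t, z s j) - (N t j : ℝ))
        ≤ ∑ _j ∈ Finset.univ.erase i, (1 - 1/(K:ℝ)) :=
      Finset.sum_le_sum (fun j _ => by linarith [hlow t j])
    have hcard : (Finset.univ.erase i).card = K - 1 := by
      rw [Finset.card_erase_of_mem (Finset.mem_univ i), Finset.card_univ, Fintype.card_fin]
    rw [Finset.sum_const, hcard, nsmul_eq_mul, Finset.sum_neg_distrib] at hbound
    have hcast : ((K - 1 : ℕ) : ℝ) = (K:ℝ) - 1 := by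
      push_cast [Nat.cast_sub hK]; ring
    rw [hcast] at hbound
    have hfin : ((K:ℝ) - 1) * (1 - 1/(K:ℝ)) ≤ (K:ℝ) - 1 := by
      have h1 : 0 < 1/(K:ℝ) := by positivity
      have h2 : (1:ℝ) ≤ (K:ℝ) := by exact_mod_cast hK
      nlinarith
    linarith
  -- conclusion
  intro t ht hcard i
  have hceil : Real.sqrt t * Real.log t ≤ (⌈Real.sqrt t * Real.log t⌉₊ : ℝ) :=
    Nat.le_ceil _
  have hcardR : ((⌈Real.sqrt t * Real.log t⌉₊ : ℕ) : ℝ)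
      ≤ (((Icc 1 t).filter (· ∈ S)).card : ℝ) := by exact_mod_cast hcard
  have hfilterSum : ∑ s ∈ (Icc 1 t).filter (· ∈ S), z s i
      = (((Icc 1 t).filter (· ∈ S)).card : ℝ) * (1/(K:ℝ)) := by
    rw [Finset.sum_congr rfl (fun s hs => hS s (Finset.mem_filter.mp hs).2 i)]
    rw [Finset.sum_const, nsmul_eq_mul]
  have hsub : ∑ s ∈ (Icc 1 t).filter (· ∈ S), z s i ≤ ∑ s ∈ Icc 1 t, z s i :=
    Finset.sum_le_sum_of_subset_of_nonneg (Finset.filter_subset _ _)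
      (fun s hs _ => (hz s (Finset.mem_Icc.mp hs).1).1 i)
  have hdiv : Real.sqrt t * Real.log t / K
      ≤ (((Icc 1 t).filter (· ∈ S)).card : ℝ) * (1/(K:ℝ)) := by
    rw [div_eq_mul_one_div]
    have h1 : (0:ℝ) ≤ 1/(K:ℝ) := by positivity
    have : Real.sqrt t * Real.log t ≤ (((Icc 1 t).filter (· ∈ S)).card : ℝ) :=
      le_trans hceil hcardR
    exact mul_le_mul_of_nonneg_right this h1
  have := hup t i
  linarith
end

section
/- (Lemma 5, Lipschitz continuity of the gradient of g_P^{σ'}.) Let P = (P_1, …, P_K) be full-support distributions on 𝒳 and let p_min = min_{i∈[K]} min_{a∈𝒳} P_i(a) > 0. Fix a hypothesis σ' with clusters A_1^{σ'}, …, A_{M_{σ'}}^{σ'} and γ ∈ (0, 1/K), and define the map ∇ : Σ_K^γ → ℝ^K by (∇(w))_i = D(P_i‖W_m(w)) if i ∈ A_m^{σ'} for some m, where W_m(w) = (Σ_{j∈A_m^{σ'}} w_j P_j)/(Σ_{j∈A_m^{σ'}} w_j), and (∇(w))_i = 0 if i belongs to no cluster of σ'. Then for all w, w' ∈ Σ_K^γ: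 ‖∇(w) − ∇(w')‖∞ ≤ (D_{σ'}/γ) · ‖w − w'‖∞, where D_{σ'} = (max_{m∈[M_{σ'}]} |A_m^{σ'}|) · |𝒳| · (1 − p_min)/(4 p_min). -/
open Finset
open scoped Classical

/-- A hypothesis on `K` arms: a finite collection of pairwise disjoint clusters,
each of size at least 2. -/
def IsHyp {K : ℕ} (σ : Finset (Finset (Fin K))) : Prop :=
  (∀ C ∈ σ, 2 ≤ C.card) ∧
  ((σ : Set (Finset (Fin K))).Pairwise fun C D => Disjoint C D)

lemma log_lip {c x y : ℝ} (hc : 0 < c) (hx : c ≤ x) (hy : c ≤ y) :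
    |Real.log x - Real.log y| ≤ |x - y| / c := by
  wlog h : y ≤ x generalizing x y with H
  · rw [abs_sub_comm, abs_sub_comm x y]
    exact H hy hx (le_of_not_ge h)
  have hy0 : 0 < y := hc.trans_le hy
  have hx0 : 0 < x := hc.trans_le hx
  have hlog : Real.log y ≤ Real.log x := Real.log_le_log hy0 h
  rw [abs_of_nonneg (sub_nonneg.2 hlog), abs_of_nonneg (sub_nonneg.2 h),
    ← Real.log_div hx0.ne' hy0.ne']
  calc Real.log (x / y) ≤ x / y - 1 := Real.log_le_sub_one_of_pos (div_pos hx0 hy0)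
    _ = (x - y) / y := by field_simp
    _ ≤ (x - y) / c := div_le_div_of_nonneg_left (sub_nonneg.2 h) hc hy

lemma main_aux {X : Type*} [Fintype X] {ι : Type*} [DecidableEq ι] (C : Finset ι)
    (P : ι → X → ℝ) (i : ι) (hi : i ∈ C)
    (pmin γ ε : ℝ) (hpmin : 0 < pmin) (hp1 : pmin ≤ 1) (hγ : 0 < γ) (hε : 0 ≤ ε)
    (hPlb : ∀ j a, pmin ≤ P j a) (hPub : ∀ j a, P j a ≤ 1)
    (hPsum : ∑ a, P i a = 1)
    (w w' : ι → ℝ) (hw : ∀ j, γ ≤ w j) (hw' : ∀ j, γ ≤ w' j)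
    (hww' : ∀ j, |w j - w' j| ≤ ε) :
    |klDiv (P i) (fun a => (∑ j ∈ C, w j * P j a) / (∑ j ∈ C, w j))
      - klDiv (P i) (fun a => (∑ j ∈ C, w' j * P j a) / (∑ j ∈ C, w' j))|
      ≤ ((C.card : ℝ) - 1) * ((1 - pmin) * ε) / ((C.card : ℝ) * γ * pmin) := by
  have hw0 : ∀ j, 0 ≤ w j := fun j => hγ.le.trans (hw j)
  have hw'0 : ∀ j, 0 ≤ w' j := fun j => hγ.le.trans (hw' j)
  set c : ℝ := (1 - pmin) * ε with hc
  have hc0 : 0 ≤ c := mul_nonneg (by linarith) hε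
  have hn1 : (1:ℝ) ≤ (C.card : ℝ) := by
    have : 1 ≤ C.card := Finset.card_pos.2 ⟨i, hi⟩
    exact_mod_cast this
  set n : ℝ := (C.card : ℝ) with hn
  set T := ∑ j ∈ C, w j with hTdef
  set T' := ∑ j ∈ C, w' j with hT'def
  have hTγ : n * γ ≤ T := by
    calc n * γ = ∑ _j ∈ C, γ := by rw [Finset.sum_const, nsmul_eq_mul]
      _ ≤ T := Finset.sum_le_sum fun j _ => hw j
  have hT'γ : n * γ ≤ T' := by
    calc n * γ = ∑ _j ∈ C, γ := by rw [Finset.sum_const, nsmul_eq_mul]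
      _ ≤ T' := Finset.sum_le_sum fun j _ => hw' j
  have hnγ : 0 < n * γ := mul_pos (by linarith) hγ
  have hT0 : 0 < T := hnγ.trans_le hTγ
  have hT'0 : 0 < T' := hnγ.trans_le hT'γ
  have hWlb : ∀ a, pmin ≤ (∑ j ∈ C, w j * P j a) / T := by
    intro a
    rw [le_div_iff₀ hT0]
    calc pmin * T = ∑ j ∈ C, w j * pmin := by
          rw [hTdef, Finset.mul_sum]; exact Finset.sum_congr rfl fun j _ => mul_comm _ _
      _ ≤ ∑ j ∈ C, w j * P j a :=
          Finset.sum_le_sum fun j _ => mul_le_mul_of_nonneg_left (hPlb j a) (hw0 j)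
  have hW'lb : ∀ a, pmin ≤ (∑ j ∈ C, w' j * P j a) / T' := by
    intro a
    rw [le_div_iff₀ hT'0]
    calc pmin * T' = ∑ j ∈ C, w' j * pmin := by
          rw [hT'def, Finset.mul_sum]; exact Finset.sum_congr rfl fun j _ => mul_comm _ _
      _ ≤ ∑ j ∈ C, w' j * P j a :=
          Finset.sum_le_sum fun j _ => mul_le_mul_of_nonneg_left (hPlb j a) (hw'0 j)
  -- bound on |W a - W' a|
  have key : ∀ a, |(∑ j ∈ C, w j * P j a) / T - (∑ j ∈ C, w' j * P j a) / T'|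
      ≤ (n - 1) * c / (n * γ) := by
    intro a
    set S := ∑ j ∈ C, w j * P j a with hS
    set S' := ∑ j ∈ C, w' j * P j a with hS'
    have hdiff : S / T - S' / T' = (S * T' - T * S') / (T * T') :=
      div_sub_div S S' hT0.ne' hT'0.ne'
    have hN : S * T' - T * S' = ∑ j ∈ C, ∑ k ∈ C, w j * w' k * (P j a - P k a) := by
      rw [hS, hS', hTdef, hT'def, Finset.sum_mul_sum, Finset.sum_mul_sum,
        ← Finset.sum_sub_distrib]
      refine Finset.sum_congr rfl fun j _ => ?_
      rw [← Finset.sum_sub_distrib]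
      exact Finset.sum_congr rfl fun k _ => by ring
    have hswap : ∑ j ∈ C, ∑ k ∈ C, w j * w' k * (P j a - P k a)
        = ∑ j ∈ C, ∑ k ∈ C, w k * w' j * (P k a - P j a) := Finset.sum_comm
    have h2N : 2 * (S * T' - T * S')
        = ∑ j ∈ C, ∑ k ∈ C, (w j * w' k - w k * w' j) * (P j a - P k a) := by
      rw [two_mul, hN]
      nth_rewrite 1 [hswap]
      rw [← Finset.sum_add_distrib]
      refine Finset.sum_congr rfl fun j _ => ?_
      rw [← Finset.sum_add_distrib]
      exact Finset.sum_congr rfl fun k _ => by ring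
    have hA : ∀ j ∈ C, ∀ k ∈ C, |(w j * w' k - w k * w' j) * (P j a - P k a)|
        ≤ (if j = k then 0 else (w j + w k) * c) := by
      intro j _ k _
      by_cases hjk : j = k
      · subst hjk; simp
      · rw [if_neg hjk, abs_mul]
        have h1 : |w j * w' k - w k * w' j| ≤ (w j + w k) * ε := by
          have e : w j * w' k - w k * w' j = w j * (w' k - w k) + w k * (w j - w' j) := by ring
          rw [e]
          calc |w j * (w' k - w k) + w k * (w j - w' j)|
              ≤ |w j * (w' k - w k)| + |w k * (w j - w' j)| := abs_add_le _ _
            _ = w j * |w' k - w k| + w k * |w j - w' j| := by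
                rw [abs_mul, abs_mul, abs_of_nonneg (hw0 j), abs_of_nonneg (hw0 k)]
            _ ≤ w j * ε + w k * ε := by
                have e1 : |w' k - w k| ≤ ε := by rw [abs_sub_comm]; exact hww' k
                have e2 : |w j - w' j| ≤ ε := hww' j
                exact add_le_add (mul_le_mul_of_nonneg_left e1 (hw0 j))
                  (mul_le_mul_of_nonneg_left e2 (hw0 k))
            _ = (w j + w k) * ε := by ring
        have h2 : |P j a - P k a| ≤ 1 - pmin := by
          rw [abs_le]
          constructor <;> nlinarith [hPlb j a, hPub j a, hPlb k a, hPub k a]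
        calc |w j * w' k - w k * w' j| * |P j a - P k a|
            ≤ ((w j + w k) * ε) * (1 - pmin) := by
              apply mul_le_mul h1 h2 (abs_nonneg _)
              exact mul_nonneg (by linarith [hw0 j, hw0 k]) hε
          _ = (w j + w k) * c := by rw [hc]; ring
    have hsum : ∑ j ∈ C, ∑ k ∈ C, (if j = k then 0 else (w j + w k) * c)
        = 2 * ((n - 1) * c * T) := by
      have inner : ∀ j ∈ C, ∑ k ∈ C, (if j = k then 0 else (w j + w k) * c)
          = (n * w j + T) * c - (w j + w j) * c := by
        intro j hj
        have e : ∀ k, (if j = k then 0 else (w j + w k) * c)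
            = (w j + w k) * c - (if j = k then (w j + w k) * c else 0) := by
          intro k; by_cases h : j = k <;> simp [h]
        rw [Finset.sum_congr rfl fun k _ => e k, Finset.sum_sub_distrib,
          Finset.sum_ite_eq, if_pos hj, ← Finset.sum_mul, Finset.sum_add_distrib,
          Finset.sum_const, nsmul_eq_mul, ← hTdef, ← hn]
      calc ∑ j ∈ C, ∑ k ∈ C, (if j = k then 0 else (w j + w k) * c)
          = ∑ j ∈ C, ((n * w j + T) * c - (w j + w j) * c) := Finset.sum_congr rfl inner
        _ = ∑ j ∈ C, (((n - 2) * c) * w j + T * c) := Finset.sum_congr rfl fun j _ => by ring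
        _ = ((n - 2) * c) * T + n * (T * c) := by
            rw [Finset.sum_add_distrib, ← Finset.mul_sum, Finset.sum_const, nsmul_eq_mul,
              ← hTdef, ← hn]
        _ = 2 * ((n - 1) * c * T) := by ring
    have hNb : |S * T' - T * S'| ≤ (n - 1) * c * T := by
      have h1 : |2 * (S * T' - T * S')| ≤ 2 * ((n - 1) * c * T) := by
        rw [h2N, ← hsum]
        calc |∑ j ∈ C, ∑ k ∈ C, (w j * w' k - w k * w' j) * (P j a - P k a)|
            ≤ ∑ j ∈ C, |∑ k ∈ C, (w j * w' k - w k * w' j) * (P j a - P k a)| :=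
              Finset.abs_sum_le_sum_abs _ _
          _ ≤ ∑ j ∈ C, ∑ k ∈ C, |(w j * w' k - w k * w' j) * (P j a - P k a)| :=
              Finset.sum_le_sum fun j _ => Finset.abs_sum_le_sum_abs _ _
          _ ≤ ∑ j ∈ C, ∑ k ∈ C, (if j = k then 0 else (w j + w k) * c) :=
              Finset.sum_le_sum fun j hj => Finset.sum_le_sum fun k hk => hA j hj k hk
      rw [abs_mul, abs_two] at h1
      linarith [abs_nonneg (S * T' - T * S')]
    calc |S / T - S' / T'| = |S * T' - T * S'| / (T * T') := by
          rw [hdiff, abs_div, abs_of_pos (mul_pos hT0 hT'0)]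
      _ ≤ ((n - 1) * c * T) / (T * T') :=
          div_le_div_of_nonneg_right hNb (mul_pos hT0 hT'0).le
      _ = (n - 1) * c / T' := by
          rw [div_eq_div_iff (mul_pos hT0 hT'0).ne' hT'0.ne']; ring
      _ ≤ (n - 1) * c / (n * γ) :=
          div_le_div_of_nonneg_left (by nlinarith) hnγ hT'γ
  -- log bound
  have hlog : ∀ a, |Real.log ((∑ j ∈ C, w' j * P j a) / T')
      - Real.log ((∑ j ∈ C, w j * P j a) / T)| ≤ (n - 1) * c / (n * γ * pmin) := by
    intro a
    calc |Real.log ((∑ j ∈ C, w' j * P j a) / T') - Real.log ((∑ j ∈ C, w j * P j a) / T)|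
        ≤ |(∑ j ∈ C, w' j * P j a) / T' - (∑ j ∈ C, w j * P j a) / T| / pmin :=
          log_lip hpmin (hW'lb a) (hWlb a)
      _ ≤ ((n - 1) * c / (n * γ)) / pmin := by
          apply div_le_div_of_nonneg_right _ hpmin.le
          rw [abs_sub_comm]; exact key a
      _ = (n - 1) * c / (n * γ * pmin) := by rw [div_div]
  -- assemble
  have hkl : klDiv (P i) (fun a => (∑ j ∈ C, w j * P j a) / T)
      - klDiv (P i) (fun a => (∑ j ∈ C, w' j * P j a) / T')
      = ∑ a, P i a * (Real.log ((∑ j ∈ C, w' j * P j a) / T')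
          - Real.log ((∑ j ∈ C, w j * P j a) / T)) := by
    rw [klDiv, klDiv, ← Finset.sum_sub_distrib]
    refine Finset.sum_congr rfl fun a _ => ?_
    have hp : P i a ≠ 0 := (hpmin.trans_le (hPlb i a)).ne'
    have h1 : ((∑ j ∈ C, w j * P j a) / T) ≠ 0 := (hpmin.trans_le (hWlb a)).ne'
    have h2 : ((∑ j ∈ C, w' j * P j a) / T') ≠ 0 := (hpmin.trans_le (hW'lb a)).ne'
    rw [Real.log_div hp h1, Real.log_div hp h2]
    ring
  have hP0 : ∀ a, 0 ≤ P i a := fun a => hpmin.le.trans (hPlb i a)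
  calc |klDiv (P i) (fun a => (∑ j ∈ C, w j * P j a) / T)
      - klDiv (P i) (fun a => (∑ j ∈ C, w' j * P j a) / T')|
      = |∑ a, P i a * (Real.log ((∑ j ∈ C, w' j * P j a) / T')
          - Real.log ((∑ j ∈ C, w j * P j a) / T))| := by rw [hkl]
    _ ≤ ∑ a, |P i a * (Real.log ((∑ j ∈ C, w' j * P j a) / T')
          - Real.log ((∑ j ∈ C, w j * P j a) / T))| := Finset.abs_sum_le_sum_abs _ _
    _ = ∑ a, P i a * |Real.log ((∑ j ∈ C, w' j * P j a) / T')
          - Real.log ((∑ j ∈ C, w j * P j a) / T)| := by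
        refine Finset.sum_congr rfl fun a _ => ?_
        rw [abs_mul, abs_of_nonneg (hP0 a)]
    _ ≤ ∑ a, P i a * ((n - 1) * c / (n * γ * pmin)) :=
        Finset.sum_le_sum fun a _ => mul_le_mul_of_nonneg_left (hlog a) (hP0 a)
    _ = (n - 1) * c / (n * γ * pmin) := by rw [← Finset.sum_mul, hPsum, one_mul]

theorem stmt9 {X : Type*} [Fintype X] [Nonempty X]
    (K : ℕ) (hK : 2 ≤ K)
    (P : Fin K → X → ℝ) (hP : ∀ i, IsDist (P i))
    (pmin : ℝ) (hpminpos : 0 < pmin)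
    (hpmlb : ∀ i a, pmin ≤ P i a) (hpmeq : ∃ i a, P i a = pmin)
    (σ' : Finset (Finset (Fin K))) (hσ' : IsHyp σ')
    (γ : ℝ) (hγ : 0 < γ) (hγK : γ < 1 / K)
    -- `grad` is the gradient map `∇` of `g_P^{σ'}` on `Σ_K^γ`:
    (grad : (Fin K → ℝ) → Fin K → ℝ)
    (hgrad : ∀ w : Fin K → ℝ, (∀ i, γ ≤ w i) → ∑ i, w i = 1 →
      ∀ C ∈ σ', ∀ i ∈ C,
        grad w i
          = klDiv (P i) (fun a => (∑ j ∈ C, w j * P j a) / (∑ j ∈ C, w j)))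
    (hgrad0 : ∀ w : Fin K → ℝ, (∀ i, γ ≤ w i) → ∑ i, w i = 1 →
      ∀ i : Fin K, (∀ C ∈ σ', i ∉ C) → grad w i = 0)
    (D : ℝ)
    (hD : D = ((σ'.sup fun C => C.card : ℕ) : ℝ) * (Fintype.card X)
        * (1 - pmin) / (4 * pmin)) :
    ∀ w w' : Fin K → ℝ,
      (∀ i, γ ≤ w i) → ∑ i, w i = 1 →
      (∀ i, γ ≤ w' i) → ∑ i, w' i = 1 →
      (⨆ i, |grad w i - grad w' i|) ≤ (D / γ) * ⨆ i, |w i - w' i| := by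
  intro w w' hw hws hw' hw's
  have hne : Nonempty (Fin K) := ⟨⟨0, by omega⟩⟩
  -- pmin ≤ 1 and bounds on P
  have hPub : ∀ j a, P j a ≤ 1 := by
    intro j a
    have h1 : P j a ≤ ∑ b, P j b :=
      Finset.single_le_sum (fun b _ => (hP j).1 b) (Finset.mem_univ a)
    rw [(hP j).2] at h1; exact h1
  have hp1 : pmin ≤ 1 := by
    obtain ⟨i0, a0, he⟩ := hpmeq
    rw [← he]; exact hPub i0 a0
  have hbdd : ∀ i, |w i - w' i| ≤ ⨆ i, |w i - w' i| := fun i =>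
    le_ciSup (f := fun i => |w i - w' i|) (Set.Finite.bddAbove (Set.finite_range _)) i
  set ε := ⨆ i, |w i - w' i| with hεdef
  have hε0 : 0 ≤ ε := le_trans (abs_nonneg _) (hbdd (Classical.arbitrary _))
  have hx1 : (1:ℝ) ≤ (Fintype.card X : ℝ) := by
    have := Fintype.card_pos (α := X); exact_mod_cast this
  have hDγ0 : 0 ≤ D / γ := by
    rw [hD]
    apply div_nonneg _ hγ.le
    apply div_nonneg _ (by linarith)
    have h0 : (0:ℝ) ≤ ((σ'.sup fun C => C.card : ℕ) : ℝ) := by positivity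
    exact mul_nonneg (mul_nonneg h0 (by linarith)) (by linarith)
  apply ciSup_le
  intro i
  by_cases hiC : ∃ C ∈ σ', i ∈ C
  · obtain ⟨C, hCσ, hiC⟩ := hiC
    have hC2 : 2 ≤ C.card := hσ'.1 C hCσ
    have hn2 : (2:ℝ) ≤ (C.card : ℝ) := by exact_mod_cast hC2
    have hm : (C.card : ℝ) ≤ ((σ'.sup fun C => C.card : ℕ) : ℝ) := by
      exact_mod_cast Finset.le_sup (f := fun C => C.card) hCσ
    rw [hgrad w hw hws C hCσ i hiC, hgrad w' hw' hw's C hCσ i hiC]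
    calc |klDiv (P i) (fun a => (∑ j ∈ C, w j * P j a) / (∑ j ∈ C, w j))
        - klDiv (P i) (fun a => (∑ j ∈ C, w' j * P j a) / (∑ j ∈ C, w' j))|
        ≤ ((C.card : ℝ) - 1) * ((1 - pmin) * ε) / ((C.card : ℝ) * γ * pmin) :=
          main_aux C P i hiC pmin γ ε hpminpos hp1 hγ hε0 hpmlb hPub (hP i).2
            w w' hw hw' hbdd
      _ ≤ (D / γ) * ε := by
          set n : ℝ := (C.card : ℝ)
          set m : ℝ := ((σ'.sup fun C => C.card : ℕ) : ℝ)
          set x : ℝ := (Fintype.card X : ℝ)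
          have hrhs : (D / γ) * ε = m * x * ((1 - pmin) * ε) / (4 * (pmin * γ)) := by
            rw [hD]; ring
          rw [hrhs, div_le_div_iff₀ (by positivity) (by positivity)]
          have hmx : n ≤ m * x := by nlinarith
          have hkey : 4 * (n - 1) ≤ m * x * n := by
            nlinarith [mul_le_mul_of_nonneg_right hmx (by linarith : (0:ℝ) ≤ n),
              sq_nonneg (n - 2)]
          have hc0 : 0 ≤ (1 - pmin) * ε := mul_nonneg (by linarith) hε0
          nlinarith [mul_le_mul_of_nonneg_left hkey
            (mul_nonneg (mul_nonneg hc0 hpminpos.le) hγ.le)]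
  · push_neg at hiC
    rw [hgrad0 w hw hws i hiC, hgrad0 w' hw' hw's i hiC]
    simpa using mul_nonneg hDγ0 hε0
end

section
/- (Lemma 6, Lipschitz continuity in P.) Let P = (P_1, …, P_K) be distributions on 𝒳 with 1/2 ≥ p_min = min_{i∈[K]} min_{a∈𝒳} P_i(a) > 0, and let ε ∈ (0, p_min/2). Then for every tuple of distributions Q = (Q_1, …, Q_K) on 𝒳 with ‖P − Q‖∞ ≤ ε, every w ∈ Σ_K with strictly positive coordinates, and every hypothesis σ: |g_P^σ(w) − g_Q^σ(w)| ≤ E·ε, where E = |𝒳| · log((2 − p_min)/p_min). Consequently, for a finite collection 𝒞 of hypotheses and σ ∈ 𝒞 with 𝒞 \ {σ} nonempty: |G_P^σ(w) − G_Q^σ(w)| ≤ E·ε. -/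
open Finset
open scoped Classical

/-- The statistic `G((P_i)_{i ∈ A}, (w_i)_{i ∈ A})` for a finite index set `A`. -/
noncomputable def GstatF {X ι : Type*} [Fintype X] (A : Finset ι)
    (P : ι → X → ℝ) (w : ι → ℝ) : ℝ :=
  if ∀ i ∈ A, w i = 0 then 0
  else ∑ i ∈ A, w i * klDiv (P i) (fun a => (∑ j ∈ A, w j * P j a) / (∑ j ∈ A, w j))

/-- The score `g_R^σ(w)` of a hypothesis `σ` under the instance `R`. -/
noncomputable def gscore {X : Type*} [Fintype X] {K : ℕ}
    (R : Fin K → X → ℝ) (σ : Finset (Finset (Fin K))) (w : Fin K → ℝ) : ℝ :=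
  ∑ C ∈ σ, GstatF C R w

lemma hdMulLog {r S : ℝ → ℝ} {d D t : ℝ} (hr : HasDerivAt r d t) (hS : HasDerivAt S D t)
    (h : S t ≠ 0) :
    HasDerivAt (fun u => r u * Real.log (S u)) (d * Real.log (S t) + r t * (D / S t)) t := by
  have h1 : HasDerivAt (fun u => Real.log (S u)) ((S t)⁻¹ * D) t :=
    (Real.hasDerivAt_log h).comp t hS
  have h2 := hr.fun_mul h1
  refine h2.congr_deriv ?_
  rw [div_eq_inv_mul]

lemma keyterm {r S : ℝ → ℝ} {d D s t : ℝ} (hr : HasDerivAt r d t) (hS : HasDerivAt S D t)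
    (hrt : 0 < r t) (hSt : 0 < S t) (hs : 0 < s) :
    HasDerivAt (fun u => r u * Real.log (r u / (S u / s)))
      (d * Real.log (r t / (S t / s)) + d - r t * D / S t) t := by
  have hg : HasDerivAt (fun u => r u * Real.log (r u) - r u * Real.log (S u) + r u * Real.log s)
      ((d * Real.log (r t) + r t * (d / r t)) - (d * Real.log (S t) + r t * (D / S t))
        + d * Real.log s) t := by
    exact (((hdMulLog hr hr hrt.ne').sub (hdMulLog hr hS hSt.ne')).add (hr.mul_const (Real.log s)))
  have heq : (fun u => r u * Real.log (r u / (S u / s)))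
      =ᶠ[nhds t] (fun u => r u * Real.log (r u) - r u * Real.log (S u) + r u * Real.log s) := by
    have e1 : ∀ᶠ u in nhds t, r u ∈ Set.Ioi (0:ℝ) := hr.continuousAt (Ioi_mem_nhds hrt)
    have e2 : ∀ᶠ u in nhds t, S u ∈ Set.Ioi (0:ℝ) := hS.continuousAt (Ioi_mem_nhds hSt)
    filter_upwards [e1, e2] with u hu1 hu2
    have hu1' : (0:ℝ) < r u := hu1
    have hu2' : (0:ℝ) < S u := hu2
    rw [Real.log_div hu1'.ne' (by positivity), Real.log_div hu2'.ne' hs.ne']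
    ring
  have := hg.congr_of_eventuallyEq heq
  refine this.congr_deriv ?_
  rw [Real.log_div hrt.ne' (by positivity), Real.log_div hSt.ne' hs.ne']
  field_simp
  ring

theorem stmt10 {X : Type*} [Fintype X] [Nonempty X]
    (K : ℕ) (hK : 2 ≤ K)
    (P : Fin K → X → ℝ) (hP : ∀ i, IsDist (P i))
    (pmin : ℝ) (hpminpos : 0 < pmin) (hpminhalf : pmin ≤ 1 / 2)
    (hpmlb : ∀ i a, pmin ≤ P i a) (hpmeq : ∃ i a, P i a = pmin)
    (ε : ℝ) (hε : 0 < ε) (hεlt : ε < pmin / 2)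
    (E : ℝ) (hE : E = (Fintype.card X : ℝ) * Real.log ((2 - pmin) / pmin))
    (Q : Fin K → X → ℝ) (hQ : ∀ i, IsDist (Q i))
    (hPQ : ∀ i a, |P i a - Q i a| ≤ ε)
    (w : Fin K → ℝ) (hwpos : ∀ i, 0 < w i) (hw1 : ∑ i, w i = 1) :
    -- Lipschitz continuity of `g^σ` in the instance
    (∀ σ : Finset (Finset (Fin K)), IsHyp σ →
      |gscore P σ w - gscore Q σ w| ≤ E * ε) ∧
    -- Lipschitz continuity of `G^σ = min_{σ' ∈ 𝒞 \ {σ}} g^{σ'}` in the instance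
    (∀ 𝒞 : Finset (Finset (Finset (Fin K))), (∀ τ ∈ 𝒞, IsHyp τ) →
      ∀ σ ∈ 𝒞, ∀ hne : (𝒞.erase σ).Nonempty,
      |(𝒞.erase σ).inf' hne (fun τ => gscore P τ w)
          - (𝒞.erase σ).inf' hne (fun τ => gscore Q τ w)| ≤ E * ε) := by
  classical
  -- the alphabet has at least two letters
  have hX2 : 2 ≤ Fintype.card X := by
    by_contra h
    push_neg at h
    have h1 : Fintype.card X = 1 := le_antisymm (by omega) Fintype.card_pos
    obtain ⟨i0, a0, hia⟩ := hpmeq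
    obtain ⟨x, hx⟩ := Fintype.card_eq_one_iff.mp h1
    have hsum := (hP i0).2
    have h2 : ∑ a, P i0 a = P i0 a0 := by
      rw [Finset.sum_eq_single a0]
      · intro b _ hb; exact absurd ((hx b).trans (hx a0).symm) hb
      · intro h; exact absurd (Finset.mem_univ a0) h
    rw [h2, hia] at hsum
    linarith
  set c : ℝ := pmin - ε with hc_def
  have hc : 0 < c := by rw [hc_def]; linarith
  set L0 : ℝ := Real.log ((2 - pmin) / pmin) with hL0
  have hL0nn : 0 ≤ L0 := Real.log_nonneg (by rw [le_div_iff₀ hpminpos]; linarith)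
  -- the key logarithmic estimate
  have key_log : ∀ x y : ℝ, c ≤ x → x ≤ 1 - c → c ≤ y → y ≤ 1 - c →
      Real.log (x / y) ≤ L0 := by
    intro x y hx1 hx2 hy1 hy2
    have hx0 : 0 < x := lt_of_lt_of_le hc hx1
    have hy0 : 0 < y := lt_of_lt_of_le hc hy1
    have h1 : x / y ≤ (2 - pmin) / pmin := by
      have h2 : x / y ≤ (1 - c) / c := div_le_div₀ (by rw [hc_def]; linarith) hx2 hc hy1
      refine h2.trans ?_
      rw [div_le_div_iff₀ hc hpminpos]
      rw [hc_def]; nlinarith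
    rw [hL0]
    exact Real.log_le_log (by positivity) h1
  have key_abs : ∀ x y : ℝ, c ≤ x → x ≤ 1 - c → c ≤ y → y ≤ 1 - c →
      |Real.log (x / y)| ≤ L0 := by
    intro x y hx1 hx2 hy1 hy2
    have hx0 : 0 < x := lt_of_lt_of_le hc hx1
    have hy0 : 0 < y := lt_of_lt_of_le hc hy1
    rw [abs_le]
    refine ⟨?_, key_log x y hx1 hx2 hy1 hy2⟩
    have h3 := key_log y x hy1 hy2 hx1 hx2
    rw [Real.log_div hx0.ne' hy0.ne']
    rw [Real.log_div hy0.ne' hx0.ne'] at h3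
    linarith
  -- the interpolation path
  set d : Fin K → X → ℝ := fun i a => P i a - Q i a with hd_def
  set R : ℝ → Fin K → X → ℝ := fun t i a => Q i a + t * d i a with hR_def
  have hdabs : ∀ i a, |d i a| ≤ ε := by
    intro i a; rw [hd_def]; exact hPQ i a
  have hRlb : ∀ t ∈ Set.Icc (0:ℝ) 1, ∀ i a, c ≤ R t i a := by
    intro t ht i a
    have h1 := abs_le.mp (hPQ i a)
    have h2 := hpmlb i a
    simp only [hR_def, hd_def, hc_def]
    nlinarith [ht.1, ht.2]
  have hsumR : ∀ t : ℝ, ∀ i, ∑ a, R t i a = 1 := by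
    intro t i
    simp only [hR_def, hd_def]
    rw [Finset.sum_add_distrib, ← Finset.mul_sum, Finset.sum_sub_distrib, (hP i).2, (hQ i).2]
    ring
  have hRub : ∀ t ∈ Set.Icc (0:ℝ) 1, ∀ i a, R t i a ≤ 1 - c := by
    intro t ht i a
    obtain ⟨b, hb⟩ := Fintype.exists_ne_of_one_lt_card (by omega) a
    have h1 : ∑ x ∈ ({a, b} : Finset X), R t i x ≤ ∑ x, R t i x :=
      Finset.sum_le_sum_of_subset_of_nonneg (Finset.subset_univ _)
        (fun x _ _ => le_trans hc.le (hRlb t ht i x))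
    rw [Finset.sum_pair (Ne.symm hb), hsumR t i] at h1
    linarith [hRlb t ht i b]
  have hRder : ∀ (j : Fin K) (a : X) (t : ℝ), HasDerivAt (fun u => R u j a) (d j a) t := by
    intro j a t
    simp only [hR_def]
    exact (hasDerivAt_mul_const (d j a)).const_add (Q j a)
  have hR1 : R 1 = P := by funext i a; simp only [hR_def, hd_def]; ring
  have hR0 : R 0 = Q := by funext i a; simp only [hR_def, hd_def]; ring
  -- Part 1
  have part1 : ∀ σ : Finset (Finset (Fin K)), IsHyp σ →
      |gscore P σ w - gscore Q σ w| ≤ E * ε := by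
    intro σ hσ
    have hCne : ∀ C ∈ σ, ∃ i, i ∈ C := by
      intro C hC
      exact Finset.card_pos.mp (by have := hσ.1 C hC; omega)
    have hspos : ∀ C ∈ σ, 0 < ∑ j ∈ C, w j := by
      intro C hC
      exact Finset.sum_pos (fun j _ => hwpos j)
        (Finset.card_pos.mp (by have := hσ.1 C hC; omega))
    have hSlb : ∀ t ∈ Set.Icc (0:ℝ) 1, ∀ C ∈ σ, ∀ a : X,
        c * (∑ j ∈ C, w j) ≤ ∑ j ∈ C, w j * R t j a := by
      intro t ht C hC a
      rw [Finset.mul_sum]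
      refine Finset.sum_le_sum fun j _ => ?_
      calc c * w j = w j * c := mul_comm _ _
        _ ≤ w j * R t j a := mul_le_mul_of_nonneg_left (hRlb t ht j a) (hwpos j).le
    have hSub : ∀ t ∈ Set.Icc (0:ℝ) 1, ∀ C ∈ σ, ∀ a : X,
        (∑ j ∈ C, w j * R t j a) ≤ (1 - c) * (∑ j ∈ C, w j) := by
      intro t ht C hC a
      rw [Finset.mul_sum]
      refine Finset.sum_le_sum fun j _ => ?_
      calc w j * R t j a ≤ w j * (1 - c) :=
            mul_le_mul_of_nonneg_left (hRub t ht j a) (hwpos j).le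
        _ = (1 - c) * w j := mul_comm _ _
    have hSpos : ∀ t ∈ Set.Icc (0:ℝ) 1, ∀ C ∈ σ, ∀ a : X,
        0 < ∑ j ∈ C, w j * R t j a := by
      intro t ht C hC a
      exact lt_of_lt_of_le (mul_pos hc (hspos C hC)) (hSlb t ht C hC a)
    have hWlb : ∀ t ∈ Set.Icc (0:ℝ) 1, ∀ C ∈ σ, ∀ a : X,
        c ≤ (∑ j ∈ C, w j * R t j a) / (∑ j ∈ C, w j) := by
      intro t ht C hC a
      rw [le_div_iff₀ (hspos C hC)]
      exact hSlb t ht C hC a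
    have hWub : ∀ t ∈ Set.Icc (0:ℝ) 1, ∀ C ∈ σ, ∀ a : X,
        (∑ j ∈ C, w j * R t j a) / (∑ j ∈ C, w j) ≤ 1 - c := by
      intro t ht C hC a
      rw [div_le_iff₀ (hspos C hC)]
      exact hSub t ht C hC a
    -- rewrite the score along the path
    have hg_eq : ∀ t : ℝ, gscore (R t) σ w
        = ∑ C ∈ σ, ∑ i ∈ C, ∑ a, w i * (R t i a *
            Real.log (R t i a / ((∑ j ∈ C, w j * R t j a) / (∑ j ∈ C, w j)))) := by
      intro t
      simp only [gscore, GstatF, klDiv]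
      refine Finset.sum_congr rfl fun C hC => ?_
      rw [if_neg]
      · exact Finset.sum_congr rfl fun i _ => Finset.mul_sum _ _ _
      · push_neg
        obtain ⟨i, hi⟩ := hCne C hC
        exact ⟨i, hi, (hwpos i).ne'⟩
    have hfun : (fun u => gscore (R u) σ w)
        = fun u => ∑ C ∈ σ, ∑ i ∈ C, ∑ a, w i * (R u i a *
            Real.log (R u i a / ((∑ j ∈ C, w j * R u j a) / (∑ j ∈ C, w j)))) :=
      funext hg_eq
    -- the derivative function
    set f' : ℝ → ℝ := fun t => ∑ C ∈ σ, ∑ i ∈ C, ∑ a,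
      w i * (d i a * Real.log (R t i a / ((∑ j ∈ C, w j * R t j a) / (∑ j ∈ C, w j)))
        + d i a - R t i a * (∑ j ∈ C, w j * d j a) / (∑ j ∈ C, w j * R t j a)) with hf'
    have hderiv : ∀ t ∈ Set.Icc (0:ℝ) 1,
        HasDerivWithinAt (fun u => gscore (R u) σ w) (f' t) (Set.Icc 0 1) t := by
      intro t ht
      rw [hfun, hf']
      apply HasDerivAt.hasDerivWithinAt
      refine HasDerivAt.fun_sum fun C hC => ?_
      refine HasDerivAt.fun_sum fun i hi => ?_
      refine HasDerivAt.fun_sum fun a _ => ?_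
      have hS : HasDerivAt (fun u => ∑ j ∈ C, w j * R u j a) (∑ j ∈ C, w j * d j a) t :=
        HasDerivAt.fun_sum fun j _ => (hRder j a t).const_mul (w j)
      exact HasDerivAt.const_mul (w i)
        (keyterm (hRder i a t) hS (lt_of_lt_of_le hc (hRlb t ht i a))
          (hSpos t ht C hC a) (hspos C hC))
    -- cancellation in the derivative
    have hcancel : ∀ t ∈ Set.Icc (0:ℝ) 1, f' t = ∑ C ∈ σ, ∑ a : X, ∑ i ∈ C,
        w i * (d i a * Real.log (R t i a / ((∑ j ∈ C, w j * R t j a) / (∑ j ∈ C, w j)))) := by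
      intro t ht
      rw [hf']
      refine Finset.sum_congr rfl fun C hC => ?_
      rw [Finset.sum_comm]
      refine Finset.sum_congr rfl fun a _ => ?_
      have hS0 : (0:ℝ) < ∑ j ∈ C, w j * R t j a := hSpos t ht C hC a
      have h1 : ∀ i ∈ C,
          w i * (d i a * Real.log (R t i a / ((∑ j ∈ C, w j * R t j a) / (∑ j ∈ C, w j)))
            + d i a - R t i a * (∑ j ∈ C, w j * d j a) / (∑ j ∈ C, w j * R t j a))
          = w i * (d i a * Real.log (R t i a / ((∑ j ∈ C, w j * R t j a) / (∑ j ∈ C, w j))))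
            + w i * d i a
            - (w i * R t i a) * ((∑ j ∈ C, w j * d j a) / (∑ j ∈ C, w j * R t j a)) := by
        intro i _; ring
      rw [Finset.sum_congr rfl h1, Finset.sum_sub_distrib, Finset.sum_add_distrib,
        ← Finset.sum_mul]
      have h2 : (∑ j ∈ C, w j * R t j a) *
          ((∑ j ∈ C, w j * d j a) / (∑ j ∈ C, w j * R t j a)) = ∑ j ∈ C, w j * d j a := by
        field_simp
      rw [h2]
      ring
    -- weights of the clusters sum to at most one
    have hσw : ∑ C ∈ σ, ∑ i ∈ C, w i ≤ 1 := by
      have hdisj : Set.PairwiseDisjoint (↑σ : Set (Finset (Fin K))) id := hσ.2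
      have hbu := Finset.sum_biUnion (s := σ) (t := id) (f := w) hdisj
      simp only [id_eq] at hbu
      rw [← hbu, ← hw1]
      exact Finset.sum_le_sum_of_subset_of_nonneg (Finset.subset_univ _)
        (fun i _ _ => (hwpos i).le)
    -- bound on the derivative
    have hbound : ∀ t ∈ Set.Icc (0:ℝ) 1, ‖f' t‖ ≤ E * ε := by
      intro t ht
      rw [Real.norm_eq_abs, hcancel t ht]
      have step1 : ∀ C ∈ σ, ∀ a : X,
          |∑ i ∈ C, w i * (d i a *
            Real.log (R t i a / ((∑ j ∈ C, w j * R t j a) / (∑ j ∈ C, w j))))|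
          ≤ (∑ i ∈ C, w i) * (ε * L0) := by
        intro C hC a
        refine (Finset.abs_sum_le_sum_abs _ _).trans ?_
        rw [Finset.sum_mul]
        refine Finset.sum_le_sum fun i hi => ?_
        rw [abs_mul, abs_of_pos (hwpos i), abs_mul]
        have hlog : |Real.log (R t i a / ((∑ j ∈ C, w j * R t j a) / (∑ j ∈ C, w j)))| ≤ L0 :=
          key_abs _ _ (hRlb t ht i a) (hRub t ht i a) (hWlb t ht C hC a) (hWub t ht C hC a)
        exact mul_le_mul_of_nonneg_left
          (mul_le_mul (hdabs i a) hlog (abs_nonneg _) hε.le) (hwpos i).le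
      refine le_trans (Finset.abs_sum_le_sum_abs _ _) ?_
      refine le_trans (Finset.sum_le_sum fun C hC =>
        (Finset.abs_sum_le_sum_abs _ _).trans
          (Finset.sum_le_sum fun a _ => step1 C hC a)) ?_
      calc ∑ C ∈ σ, ∑ _a : X, (∑ i ∈ C, w i) * (ε * L0)
          = (∑ C ∈ σ, ∑ i ∈ C, w i) * ((Fintype.card X : ℝ) * (ε * L0)) := by
            rw [Finset.sum_mul]
            refine Finset.sum_congr rfl fun C _ => ?_
            rw [Finset.sum_const, Finset.card_univ, nsmul_eq_mul]
            ring
        _ ≤ 1 * ((Fintype.card X : ℝ) * (ε * L0)) :=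
            mul_le_mul_of_nonneg_right hσw
              (mul_nonneg (Nat.cast_nonneg _) (mul_nonneg hε.le hL0nn))
        _ = E * ε := by rw [hE]; ring
    -- mean value inequality
    have hfinal := Convex.norm_image_sub_le_of_norm_hasDerivWithin_le hderiv hbound
      (convex_Icc 0 1) (Set.left_mem_Icc.mpr zero_le_one) (Set.right_mem_Icc.mpr zero_le_one)
    simp only [hR1, hR0, sub_zero, Real.norm_eq_abs, abs_one, mul_one] at hfinal
    exact hfinal
  refine ⟨part1, ?_⟩
  -- Part 2
  intro 𝒞 h𝒞 σ hσ hne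
  obtain ⟨τP, hτP, hPeq⟩ := Finset.exists_mem_eq_inf' hne (fun τ => gscore P τ w)
  obtain ⟨τQ, hτQ, hQeq⟩ := Finset.exists_mem_eq_inf' hne (fun τ => gscore Q τ w)
  have h1 := abs_le.mp (part1 τP (h𝒞 τP (Finset.mem_of_mem_erase hτP)))
  have h2 := abs_le.mp (part1 τQ (h𝒞 τQ (Finset.mem_of_mem_erase hτQ)))
  have h3 : (𝒞.erase σ).inf' hne (fun τ => gscore Q τ w) ≤ gscore Q τP w :=
    Finset.inf'_le _ hτP
  have h4 : (𝒞.erase σ).inf' hne (fun τ => gscore P τ w) ≤ gscore P τQ w :=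
    Finset.inf'_le _ hτQ
  rw [abs_le]
  constructor
  · linarith [h1.1, h3, hPeq]
  · linarith [h2.2, h4, hQeq]
end

section
/- (Deterministic recursion bound underlying Lemma 11 and Corollary 2, proved in Appendix B.V.) Let K ≥ 1 be an integer, L > 0 and D > 0 reals, (r_t)_{t≥1} and (ε_t)_{t≥1} sequences of positive reals, I_f ⊆ ℕ, and integers T₁, T₂ with 3 ≤ T₁ < T₂ and |I_f ∩ [T₂]| ≤ √T₂ · log T₂ + 2. Suppose (Δ_t)_{t≥0} is a real sequence such that Δ_{T₁} ≤ L and, for every integer t with T₁ < t ≤ T₂: if t ∉ I_f then t·Δ_t ≤ (t − 1)·Δ_{t−1} + r_t + ε_t + 16DK/(√t · log t), while if t ∈ I_f then Δ_{t−1} ≤ L and Δ_t ≤ Δ_{t−1} + L/t. Then T₂·Δ_{T₂} ≤ T₁·L + 2L·√T₂·log T₂ + Σ_{t=1}^{T₂} (r_t + ε_t) + 32DK·√T₂ + 4L. -/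
open Finset
open scoped Classical

lemma sum_inv_sqrt_le (a : ℕ) : ∀ n, a ≤ n →
    ∑ s ∈ Icc (a + 1) n, (Real.sqrt s)⁻¹ ≤ 2 * Real.sqrt n := by
  intro n hn
  induction n, hn using Nat.le_induction with
  | base =>
      rw [Finset.Icc_eq_empty (by omega)]
      simp [Real.sqrt_nonneg]
  | succ n hn ih =>
      rw [Finset.sum_Icc_succ_top (by omega : a + 1 ≤ n + 1)]
      have hx0 : (0:ℝ) < Real.sqrt (n + 1) := Real.sqrt_pos.mpr (by positivity)
      have hx : Real.sqrt ((n:ℝ) + 1) ^ 2 = (n:ℝ) + 1 := Real.sq_sqrt (by positivity)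
      have hy : Real.sqrt (n:ℝ) ^ 2 = (n:ℝ) := Real.sq_sqrt (by positivity)
      have hy0 : (0:ℝ) ≤ Real.sqrt n := Real.sqrt_nonneg _
      have key : (Real.sqrt ((n:ℕ)+1 : ℕ))⁻¹ ≤ 2 * Real.sqrt ((n:ℕ)+1 : ℕ) - 2 * Real.sqrt n := by
        push_cast
        rw [inv_eq_one_div, div_le_iff₀ hx0]
        nlinarith [sq_nonneg (Real.sqrt ((n:ℝ)+1) - Real.sqrt n)]
      push_cast at key ⊢
      linarith

theorem stmt14 (K : ℕ) (hK : 1 ≤ K) (L D : ℝ) (hL : 0 < L) (hD : 0 < D)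
    (r ε : ℕ → ℝ) (hr : ∀ t, 1 ≤ t → 0 < r t) (hε : ∀ t, 1 ≤ t → 0 < ε t)
    (If : Set ℕ) (T₁ T₂ : ℕ) (hT₁ : 3 ≤ T₁) (hT₁₂ : T₁ < T₂)
    (hIf : (((Icc 1 T₂).filter (· ∈ If)).card : ℝ)
      ≤ Real.sqrt T₂ * Real.log T₂ + 2)
    (Δ : ℕ → ℝ)
    (hΔT₁ : Δ T₁ ≤ L)
    (hrec : ∀ t : ℕ, T₁ < t → t ≤ T₂ → t ∉ If →
      (t : ℝ) * Δ t ≤ ((t : ℝ) - 1) * Δ (t - 1) + r t + ε t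
        + 16 * D * K / (Real.sqrt t * Real.log t))
    (hIfstep : ∀ t : ℕ, T₁ < t → t ≤ T₂ → t ∈ If →
      Δ (t - 1) ≤ L ∧ Δ t ≤ Δ (t - 1) + L / t) :
    (T₂ : ℝ) * Δ T₂
      ≤ (T₁ : ℝ) * L + 2 * L * Real.sqrt T₂ * Real.log T₂
        + (∑ t ∈ Icc 1 T₂, (r t + ε t)) + 32 * D * K * Real.sqrt T₂ + 4 * L := by
  set c : ℕ → ℝ := fun s =>
    if s ∈ If then 2 * L else r s + ε s + 16 * D * K / (Real.sqrt s * Real.log s)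
    with hc
  -- main induction
  have main : ∀ t, T₁ ≤ t → t ≤ T₂ →
      (t : ℝ) * Δ t ≤ (T₁ : ℝ) * L + ∑ s ∈ Icc (T₁ + 1) t, c s := by
    intro t ht
    induction t, ht using Nat.le_induction with
    | base =>
        intro _
        rw [Finset.Icc_eq_empty (by omega)]
        simp only [Finset.sum_empty, add_zero]
        exact mul_le_mul_of_nonneg_left hΔT₁ (by positivity)
    | succ t ht ih =>
        intro hle
        have hle' : t ≤ T₂ := by omega
        have ih' := ih hle'
        rw [Finset.sum_Icc_succ_top (by omega : T₁ + 1 ≤ t + 1)]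
        have hsub : (t + 1) - 1 = t := rfl
        by_cases hmem : t + 1 ∈ If
        · obtain ⟨h1, h2⟩ := hIfstep (t + 1) (by omega) hle hmem
          rw [hsub] at h1 h2
          have hct : c (t + 1) = 2 * L := by simp [hc, hmem]
          have hpos : (0:ℝ) < (t:ℝ) + 1 := by positivity
          have step : ((t:ℕ)+1 : ℝ) * Δ (t + 1) ≤ (t : ℝ) * Δ t + 2 * L := by
            have h3 : ((t:ℝ) + 1) * Δ (t + 1) ≤ ((t:ℝ) + 1) * (Δ t + L / ((t:ℕ)+1 : ℝ)) :=
              mul_le_mul_of_nonneg_left (by push_cast at h2 ⊢; exact h2) (le_of_lt hpos)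
            have h4 : ((t:ℝ) + 1) * (L / ((t:ℝ) + 1)) = L := by
              field_simp
            push_cast at h3 ⊢
            nlinarith [h1, hpos]
          push_cast at step ih' ⊢
          rw [hct]
          linarith
        · have h := hrec (t + 1) (by omega) hle hmem
          rw [hsub] at h
          have hct : c (t + 1) = r (t+1) + ε (t+1)
              + 16 * D * K / (Real.sqrt (t+1 : ℕ) * Real.log (t+1 : ℕ)) := by
            simp [hc, hmem]
          push_cast at h ih' ⊢
          rw [hct]
          push_cast
          linarith
  have hmain := main T₂ (le_of_lt hT₁₂) le_rfl
  -- now bound the sum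
  have hsplit := Finset.sum_filter_add_sum_filter_not (Icc (T₁ + 1) T₂) (· ∈ If) c
  -- bound the If part
  have hcard : (((Icc (T₁ + 1) T₂).filter (· ∈ If)).card : ℝ)
      ≤ Real.sqrt T₂ * Real.log T₂ + 2 := by
    refine le_trans ?_ hIf
    have hsubset : (Icc (T₁ + 1) T₂).filter (· ∈ If) ⊆ (Icc 1 T₂).filter (· ∈ If) := by
      apply Finset.filter_subset_filter
      apply Finset.Icc_subset_Icc_left
      omega
    exact_mod_cast Finset.card_le_card hsubset
  have hIfsum : ∑ s ∈ (Icc (T₁ + 1) T₂).filter (· ∈ If), c s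
      ≤ 2 * L * Real.sqrt T₂ * Real.log T₂ + 4 * L := by
    have : ∑ s ∈ (Icc (T₁ + 1) T₂).filter (· ∈ If), c s
        = (((Icc (T₁ + 1) T₂).filter (· ∈ If)).card : ℝ) * (2 * L) := by
      rw [Finset.sum_congr rfl (fun s hs => ?_), Finset.sum_const, nsmul_eq_mul]
      simp only [Finset.mem_filter] at hs
      simp [hc, hs.2]
    rw [this]
    nlinarith [hcard, hL]
  -- bound the non-If part
  have hnotsum : ∑ s ∈ (Icc (T₁ + 1) T₂).filter (· ∉ If), c s
      ≤ (∑ t ∈ Icc 1 T₂, (r t + ε t)) + 32 * D * K * Real.sqrt T₂ := by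
    have hstep : ∀ s ∈ (Icc (T₁ + 1) T₂).filter (· ∉ If),
        c s ≤ (r s + ε s) + 16 * D * K * (Real.sqrt s)⁻¹ := by
      intro s hs
      simp only [Finset.mem_filter, Finset.mem_Icc] at hs
      obtain ⟨⟨hs1, hs2⟩, hs3⟩ := hs
      have hs4 : (4:ℕ) ≤ s := by omega
      have hsr : (4:ℝ) ≤ (s:ℝ) := by exact_mod_cast hs4
      have hsq : (0:ℝ) < Real.sqrt s := Real.sqrt_pos.mpr (by linarith)
      have hlog : (1:ℝ) ≤ Real.log s := by
        have h4 : Real.log 4 ≤ Real.log s := Real.log_le_log (by norm_num) hsr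
        have : Real.log 4 = 2 * Real.log 2 := by
          rw [show (4:ℝ) = 2 ^ 2 by norm_num, Real.log_pow]; push_cast; ring
        nlinarith [Real.log_two_gt_d9]
      have hDK : (0:ℝ) < 16 * D * K := by
        have : (1:ℝ) ≤ (K:ℝ) := by exact_mod_cast hK
        positivity
      have hdiv : 16 * D * K / (Real.sqrt s * Real.log s)
          ≤ 16 * D * K * (Real.sqrt s)⁻¹ := by
        rw [← div_eq_mul_inv]
        apply div_le_div_of_nonneg_left (le_of_lt hDK) hsq
        nlinarith
      simp only [hc, if_neg hs3]
      linarith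
    calc ∑ s ∈ (Icc (T₁ + 1) T₂).filter (· ∉ If), c s
        ≤ ∑ s ∈ (Icc (T₁ + 1) T₂).filter (· ∉ If),
            ((r s + ε s) + 16 * D * K * (Real.sqrt s)⁻¹) := Finset.sum_le_sum hstep
      _ = (∑ s ∈ (Icc (T₁ + 1) T₂).filter (· ∉ If), (r s + ε s))
            + ∑ s ∈ (Icc (T₁ + 1) T₂).filter (· ∉ If), 16 * D * K * (Real.sqrt s)⁻¹ := by
            rw [Finset.sum_add_distrib]
      _ ≤ (∑ t ∈ Icc 1 T₂, (r t + ε t)) + 32 * D * K * Real.sqrt T₂ := by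
            gcongr ?_ + ?_
            · apply Finset.sum_le_sum_of_subset_of_nonneg
              · refine subset_trans (Finset.filter_subset _ _) ?_
                apply Finset.Icc_subset_Icc_left; omega
              · intro i hi _
                simp only [Finset.mem_Icc] at hi
                have := hr i hi.1; have := hε i hi.1; linarith
            · have hDK : (0:ℝ) ≤ 16 * D * K := by positivity
              calc ∑ s ∈ (Icc (T₁ + 1) T₂).filter (· ∉ If), 16 * D * K * (Real.sqrt s)⁻¹
                  ≤ ∑ s ∈ Icc (T₁ + 1) T₂, 16 * D * K * (Real.sqrt s)⁻¹ := by
                    apply Finset.sum_le_sum_of_subset_of_nonneg (Finset.filter_subset _ _)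
                    intro i hi _
                    positivity
                _ = 16 * D * K * ∑ s ∈ Icc (T₁ + 1) T₂, (Real.sqrt s)⁻¹ := by
                    rw [Finset.mul_sum]
                _ ≤ 16 * D * K * (2 * Real.sqrt T₂) := by
                    apply mul_le_mul_of_nonneg_left (sum_inv_sqrt_le T₁ T₂ (le_of_lt hT₁₂)) hDK
                _ = 32 * D * K * Real.sqrt T₂ := by ring
  linarith [hmain, hsplit, hIfsum, hnotsum]
end

section
/- (Appendix A, Example 3 satisfies Assumption 1.) Let S be a finite set and N ≥ 1 an integer. Let σ₁ and σ₂ be partitions of S into exactly N nonempty blocks each. If every block of σ₁ of size at least 2 is contained in some block of σ₂ of size at least 2, then σ₁ = σ₂. Equivalently, no partition of S into N nonempty blocks dominates a different partition of S into N nonempty blocks, where σ dominates σ' means that every size-≥2 block of σ is a subset of some size-≥2 block of σ'. -/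
open Finset

/-- `σ` is a partition of the (finite) type `S` into exactly `N` nonempty blocks. -/
def IsNPartition {S : Type*} [Fintype S] [DecidableEq S]
    (N : ℕ) (σ : Finset (Finset S)) : Prop :=
  σ.card = N ∧ (∀ B ∈ σ, B.Nonempty) ∧
  ((σ : Set (Finset S)).Pairwise fun B C => Disjoint B C) ∧
  (∀ x : S, ∃ B ∈ σ, x ∈ B)

theorem stmt15 {S : Type*} [Fintype S] [DecidableEq S]
    (N : ℕ) (hN : 1 ≤ N)
    (σ₁ σ₂ : Finset (Finset S))
    (h₁ : IsNPartition N σ₁) (h₂ : IsNPartition N σ₂)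
    -- every block of `σ₁` of size at least 2 is contained in a block of `σ₂`
    -- of size at least 2
    (hdom : ∀ B ∈ σ₁, 2 ≤ B.card → ∃ C ∈ σ₂, 2 ≤ C.card ∧ B ⊆ C) :
    σ₁ = σ₂ := by
  obtain ⟨hc1, hne1, hdisj1, hcov1⟩ := h₁
  obtain ⟨hc2, hne2, hdisj2, hcov2⟩ := h₂
  -- uniqueness of σ₂-block containing a point
  have huniq : ∀ {C C' : Finset S}, C ∈ σ₂ → C' ∈ σ₂ → ∀ {x : S}, x ∈ C → x ∈ C' → C = C' := by
    intro C C' hC hC' x hx hx'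
    by_contra hne
    have := (hdisj2 hC hC' hne).le_bot (by simp [Finset.mem_inter, hx, hx'] : x ∈ C ⊓ C')
    simp at this
  -- every block of σ₁ is contained in some block of σ₂
  have hsub : ∀ B ∈ σ₁, ∃ C ∈ σ₂, B ⊆ C := by
    intro B hB
    rcases Nat.lt_or_ge B.card 2 with h | h
    · obtain ⟨x, hx⟩ := hne1 B hB
      have hB1 : B = {x} := by
        apply Finset.eq_singleton_iff_unique_mem.mpr
        refine ⟨hx, fun y hy => ?_⟩
        by_contra hne
        have : 2 ≤ B.card := Finset.one_lt_card.mpr ⟨y, hy, x, hx, hne⟩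
        omega
      obtain ⟨C, hC, hxC⟩ := hcov2 x
      exact ⟨C, hC, by simp [hB1, hxC]⟩
    · obtain ⟨C, hC, _, hBC⟩ := hdom B hB h
      exact ⟨C, hC, hBC⟩
  choose f hf hfs using hsub
  -- f is surjective onto σ₂
  have hsurj : ∀ C ∈ σ₂, ∃ B hB, f B hB = C := by
    intro C hC
    obtain ⟨x, hx⟩ := hne2 C hC
    obtain ⟨B, hB, hxB⟩ := hcov1 x
    exact ⟨B, hB, huniq (hf B hB) hC (hfs B hB hxB) hx⟩
  have hinj := Finset.inj_on_of_surj_on_of_card_le f hf hsurj (by rw [hc1, hc2])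
  -- show σ₂ ⊆ σ₁
  have hss : σ₂ ⊆ σ₁ := by
    intro C hC
    obtain ⟨B, hB, hfB⟩ := hsurj C hC
    have hCB : C ⊆ B := by
      intro y hy
      obtain ⟨B', hB', hyB'⟩ := hcov1 y
      have : f B' hB' = C := huniq (hf B' hB') hC (hfs B' hB' hyB') hy
      have hBB : B' = B := hinj hB' hB (this.trans hfB.symm)
      rwa [hBB] at hyB'
    have : C = B := le_antisymm hCB (hfB ▸ hfs B hB)
    rwa [this]
  exact (Finset.eq_of_subset_of_card_le hss (by rw [hc1, hc2])).symm
end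

section
/- (Equalized-divergence mixture used in the finiteness-of-τ proof.) Let P and Q be distinct full-support distributions on 𝒳, and for α ∈ [0,1] set W_α = α·P + (1−α)·Q. Then: (i) there exists a unique α* ∈ [0,1] such that D(P‖W_{α*}) = D(Q‖W_{α*}); (ii) α* ∈ (0,1) and the common value D(P‖W_{α*}) is strictly positive; and (iii) for every full-support distribution W on 𝒳, max{D(P‖W), D(Q‖W)} ≥ D(P‖W_{α*}), i.e., the minimum over full-support W of max{D(P‖W), D(Q‖W)} is attained at W_{α*}. -/
open Finset

lemma kl_term_ge (p v : ℝ) (hp : 0 ≤ p) (hv : 0 < v) :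
    p - v ≤ p * Real.log (p / v) := by
  rcases hp.eq_or_lt with h | h
  · rw [← h]; simp; linarith
  · have h1 : Real.log (v / p) ≤ v / p - 1 := Real.log_le_sub_one_of_pos (by positivity)
    have h2 : Real.log (p / v) = - Real.log (v / p) := by
      rw [← Real.log_inv]; congr 1; field_simp
    have h3 : p * (v / p) = v := by field_simp
    nlinarith

lemma kl_term_gt (p v : ℝ) (hp : 0 ≤ p) (hv : 0 < v) (hne : p ≠ v) :
    p - v < p * Real.log (p / v) := by
  rcases hp.eq_or_lt with h | h
  · rw [← h]; simp; linarith
  · have hvp : v / p ≠ 1 := by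
      intro hcon
      apply hne
      field_simp at hcon
      linarith
    have h1 : Real.log (v / p) < v / p - 1 :=
      Real.log_lt_sub_one_of_pos (by positivity) hvp
    have h2 : Real.log (p / v) = - Real.log (v / p) := by
      rw [← Real.log_inv]; congr 1; field_simp
    have h3 : p * (v / p) = v := by field_simp
    nlinarith

lemma klDiv_nonneg_aux {X : Type*} [Fintype X] (P V : X → ℝ) (hP : IsDist P)
    (hV : IsDist V) (hVpos : ∀ a, 0 < V a) : 0 ≤ klDiv P V := by
  have h : ∑ a, (P a - V a) ≤ klDiv P V :=
    Finset.sum_le_sum fun a _ => kl_term_ge _ _ (hP.1 a) (hVpos a)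
  rw [Finset.sum_sub_distrib, hP.2, hV.2] at h
  linarith

lemma klDiv_pos_aux {X : Type*} [Fintype X] (P V : X → ℝ) (hP : IsDist P)
    (hV : IsDist V) (hVpos : ∀ a, 0 < V a) (hne : P ≠ V) : 0 < klDiv P V := by
  obtain ⟨a0, ha0⟩ := Function.ne_iff.mp hne
  have h : ∑ a, (P a - V a) < klDiv P V := by
    apply Finset.sum_lt_sum (fun a _ => kl_term_ge _ _ (hP.1 a) (hVpos a))
    exact ⟨a0, Finset.mem_univ a0, kl_term_gt _ _ (hP.1 a0) (hVpos a0) ha0⟩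
  rw [Finset.sum_sub_distrib, hP.2, hV.2] at h
  linarith

theorem stmt18 {X : Type*} [Fintype X] (hX : 2 ≤ Fintype.card X)
    (P Q : X → ℝ) (hP : IsDist P) (hQ : IsDist Q)
    (hPpos : ∀ a, 0 < P a) (hQpos : ∀ a, 0 < Q a) (hPQ : P ≠ Q)
    (W : ℝ → X → ℝ) (hW : ∀ α a, W α a = α * P a + (1 - α) * Q a) :
    ∃ αstar : ℝ,
      -- (i)+(ii): a unique equalizing weight exists, it lies in (0,1),
      -- and the common divergence value is strictly positive
      (0 < αstar ∧ αstar < 1) ∧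
      klDiv P (W αstar) = klDiv Q (W αstar) ∧
      0 < klDiv P (W αstar) ∧
      (∀ α : ℝ, 0 ≤ α → α ≤ 1 →
        klDiv P (W α) = klDiv Q (W α) → α = αstar) ∧
      -- (iii): `W αstar` minimizes the max of the two divergences over all
      -- full-support distributions
      (∀ V : X → ℝ, IsDist V → (∀ a, 0 < V a) →
        klDiv P (W αstar) ≤ max (klDiv P V) (klDiv Q V)) := by
  classical
  -- positivity of W on [0,1]
  have hWpos : ∀ α : ℝ, 0 ≤ α → α ≤ 1 → ∀ a, 0 < W α a := by
    intro α h0 h1 a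
    rw [hW]
    rcases h0.eq_or_lt with h | h
    · rw [← h]; simpa using hQpos a
    · have hq := hQpos a
      have hp := hPpos a
      nlinarith
  have hWsum : ∀ α : ℝ, ∑ a, W α a = 1 := by
    intro α
    simp only [hW]
    rw [Finset.sum_add_distrib, ← Finset.mul_sum, ← Finset.mul_sum, hP.2, hQ.2]
    ring
  set f : ℝ → ℝ := fun α => klDiv P (W α) - klDiv Q (W α) with hfdef
  -- rewrite f in terms of a sum
  have hfeq : ∀ α : ℝ, 0 ≤ α → α ≤ 1 → f α =
      (∑ a, (P a * Real.log (P a) - Q a * Real.log (Q a)))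
        - ∑ a, (P a - Q a) * Real.log (W α a) := by
    intro α h0 h1
    simp only [hfdef, klDiv]
    rw [← Finset.sum_sub_distrib, ← Finset.sum_sub_distrib]
    apply Finset.sum_congr rfl
    intro a _
    rw [Real.log_div (hPpos a).ne' (hWpos α h0 h1 a).ne',
        Real.log_div (hQpos a).ne' (hWpos α h0 h1 a).ne']
    ring
  -- strict antitonicity of f on [0,1]
  have hmono : ∀ α β : ℝ, 0 ≤ α → β ≤ 1 → α < β → f β < f α := by
    intro α β h0 h1 hab
    have h0' : (0:ℝ) ≤ β := le_trans h0 hab.le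
    have h1' : α ≤ 1 := le_trans hab.le h1
    rw [hfeq α h0 h1', hfeq β h0' h1]
    have hsum : ∑ a, (P a - Q a) * Real.log (W α a)
        < ∑ a, (P a - Q a) * Real.log (W β a) := by
      obtain ⟨a0, ha0⟩ := Function.ne_iff.mp hPQ
      apply Finset.sum_lt_sum
      · intro a _
        have hdiff : W β a - W α a = (β - α) * (P a - Q a) := by
          rw [hW, hW]; ring
        rcases lt_trichotomy (P a) (Q a) with h | h | h
        · have hWlt : W β a < W α a := by nlinarith
          have hlog : Real.log (W β a) < Real.log (W α a) :=
            Real.log_lt_log (hWpos β h0' h1 a) hWlt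
          nlinarith
        · rw [h]; simp
        · have hWlt : W α a < W β a := by nlinarith
          have hlog : Real.log (W α a) < Real.log (W β a) :=
            Real.log_lt_log (hWpos α h0 h1' a) hWlt
          nlinarith
      · refine ⟨a0, Finset.mem_univ a0, ?_⟩
        have hdiff : W β a0 - W α a0 = (β - α) * (P a0 - Q a0) := by
          rw [hW, hW]; ring
        rcases lt_trichotomy (P a0) (Q a0) with h | h | h
        · have hWlt : W β a0 < W α a0 := by nlinarith
          have hlog : Real.log (W β a0) < Real.log (W α a0) :=
            Real.log_lt_log (hWpos β h0' h1 a0) hWlt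
          nlinarith
        · exact absurd h ha0
        · have hWlt : W α a0 < W β a0 := by nlinarith
          have hlog : Real.log (W α a0) < Real.log (W β a0) :=
            Real.log_lt_log (hWpos α h0 h1' a0) hWlt
          nlinarith
    linarith
  -- endpoint values
  have hW0 : W 0 = Q := funext fun a => by rw [hW]; ring
  have hW1 : W 1 = P := funext fun a => by rw [hW]; ring
  have hQQ : klDiv Q Q = 0 := by
    simp only [klDiv]
    apply Finset.sum_eq_zero
    intro a _
    rw [div_self (hQpos a).ne', Real.log_one, mul_zero]
  have hPP : klDiv P P = 0 := by
    simp only [klDiv]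
    apply Finset.sum_eq_zero
    intro a _
    rw [div_self (hPpos a).ne', Real.log_one, mul_zero]
  have hf0 : 0 < f 0 := by
    simp only [hfdef, hW0, hQQ, sub_zero]
    exact klDiv_pos_aux P Q hP hQ hQpos hPQ
  have hf1 : f 1 < 0 := by
    simp only [hfdef, hW1, hPP, zero_sub, neg_neg]
    have := klDiv_pos_aux Q P hQ hP hPpos (Ne.symm hPQ)
    linarith
  -- continuity of f on [0,1]
  have hcont : ContinuousOn f (Set.Icc (0:ℝ) 1) := by
    have hfform : f = fun α =>
        (∑ a, P a * Real.log (P a / (α * P a + (1 - α) * Q a)))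
          - ∑ a, Q a * Real.log (Q a / (α * P a + (1 - α) * Q a)) := by
      funext α
      simp only [hfdef, klDiv, hW]
    rw [hfform]
    apply ContinuousOn.sub
    · apply continuousOn_finset_sum
      intro a _
      apply ContinuousOn.mul continuousOn_const
      apply ContinuousOn.log
      · apply ContinuousOn.div continuousOn_const
        · fun_prop
        · intro x hx
          have := hWpos x hx.1 hx.2 a
          rw [hW] at this
          exact this.ne'
      · intro x hx
        have hw := hWpos x hx.1 hx.2 a
        rw [hW] at hw
        exact (div_pos (hPpos a) hw).ne'
    · apply continuousOn_finset_sum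
      intro a _
      apply ContinuousOn.mul continuousOn_const
      apply ContinuousOn.log
      · apply ContinuousOn.div continuousOn_const
        · fun_prop
        · intro x hx
          have := hWpos x hx.1 hx.2 a
          rw [hW] at this
          exact this.ne'
      · intro x hx
        have hw := hWpos x hx.1 hx.2 a
        rw [hW] at hw
        exact (div_pos (hQpos a) hw).ne'
  -- IVT
  have hIVT := intermediate_value_Icc' (zero_le_one) hcont
  have h0mem : (0:ℝ) ∈ Set.Icc (f 1) (f 0) := ⟨hf1.le, hf0.le⟩
  obtain ⟨αstar, hmem, hfα⟩ := hIVT h0mem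
  have hα0 : 0 < αstar := by
    rcases hmem.1.eq_or_lt with h | h
    · exfalso; rw [← h] at hfα; linarith
    · exact h
  have hα1 : αstar < 1 := by
    rcases hmem.2.eq_or_lt with h | h
    · exfalso; rw [h] at hfα; linarith
    · exact h
  have heqD : klDiv P (W αstar) = klDiv Q (W αstar) := by
    have : f αstar = 0 := hfα
    simp only [hfdef] at this
    linarith
  -- W αstar is a distribution
  have hWdist : IsDist (W αstar) :=
    ⟨fun a => (hWpos αstar hα0.le hα1.le a).le, hWsum αstar⟩
  -- P ≠ W αstar
  have hPneW : P ≠ W αstar := by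
    intro hcon
    apply hPQ
    funext a
    have := congrFun hcon a
    rw [hW] at this
    have h1 : (1 - αstar) * (P a - Q a) = 0 := by linarith [this]
    have h2 : (1:ℝ) - αstar ≠ 0 := by linarith
    have := mul_eq_zero.mp h1
    rcases this with h | h
    · exact absurd h h2
    · linarith
  have hDpos : 0 < klDiv P (W αstar) :=
    klDiv_pos_aux P (W αstar) hP hWdist (hWpos αstar hα0.le hα1.le) hPneW
  refine ⟨αstar, ⟨hα0, hα1⟩, heqD, hDpos, ?_, ?_⟩
  · -- uniqueness
    intro α h0 h1 heq
    have hfa : f α = 0 := by simp only [hfdef]; linarith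
    by_contra hne
    rcases lt_or_gt_of_ne hne with h | h
    · have := hmono α αstar h0 hα1.le h
      rw [hfa, hfα] at this
      exact lt_irrefl _ this
    · have := hmono αstar α hα0.le h1 h
      rw [hfa, hfα] at this
      exact lt_irrefl _ this
  · -- minimax
    intro V hV hVpos
    have hwpos := hWpos αstar hα0.le hα1.le
    have hsplit : ∀ R : X → ℝ, (∀ a, 0 < R a) →
        klDiv R V = klDiv R (W αstar) + ∑ a, R a * Real.log (W αstar a / V a) := by
      intro R hRpos
      simp only [klDiv]
      rw [← Finset.sum_add_distrib]
      apply Finset.sum_congr rfl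
      intro a _
      rw [Real.log_div (hRpos a).ne' (hVpos a).ne',
          Real.log_div (hRpos a).ne' (hwpos a).ne',
          Real.log_div (hwpos a).ne' (hVpos a).ne']
      ring
    have hcombo : klDiv (W αstar) V
        = αstar * (∑ a, P a * Real.log (W αstar a / V a))
          + (1 - αstar) * (∑ a, Q a * Real.log (W αstar a / V a)) := by
      simp only [klDiv]
      rw [Finset.mul_sum, Finset.mul_sum, ← Finset.sum_add_distrib]
      apply Finset.sum_congr rfl
      intro a _
      rw [hW]
      ring
    have hkey : αstar * klDiv P V + (1 - αstar) * klDiv Q V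
        = klDiv P (W αstar) + klDiv (W αstar) V := by
      rw [hsplit P hPpos, hsplit Q hQpos, hcombo, ← heqD]
      ring
    have hnn : 0 ≤ klDiv (W αstar) V := klDiv_nonneg_aux _ _ hWdist hV hVpos
    have hmaxP : klDiv P V ≤ max (klDiv P V) (klDiv Q V) := le_max_left _ _
    have hmaxQ : klDiv Q V ≤ max (klDiv P V) (klDiv Q V) := le_max_right _ _
    nlinarith [hα0, hα1]
end
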